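/- arXiv:1803.04931 — 4 statements merged into one kernel-verified Lean document; each statement's English description precedes it below -/
import Mathlib

section
/- Let 2 ≤ t ≤ k ≤ v and let ℬ be a t-(v,k,1) design (Steiner system) on X = {1,…,v} which is non-empty and not equal to the family of all k-subsets of X. For each block B ∈ ℬ and each t-element subset T ⊆ B, define g_{B,T} = x^{B,t} − C(k,t)·x^T. Then: (i) I(ℬ) equals the ideal generated by G_0 ∪ { g_{B,T} : B ∈ ℬ, T ⊆ B, |T| = t }; (ii) γ2(ℬ) ≤ t. -/
set_option linter.unusedSectionVars false
set_option maxHeartbeats 1000000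

noncomputable section

variable {σ : Type*}

/-- Characteristic 0-1 vector `c_B` of a finite set `B` of points. -/
def charVec [DecidableEq σ] (B : Finset σ) : σ → ℂ := fun i => if i ∈ B then 1 else 0

/-- `I(ℬ)`: the ideal of all polynomials vanishing at the characteristic vector of
every block of `ℬ`. -/
def designIdeal [DecidableEq σ] (ℬ : Finset (Finset σ)) : Ideal (MvPolynomial σ ℂ) :=
  ⨅ B ∈ ℬ, RingHom.ker (MvPolynomial.eval (charVec B))

/-- The generating set `G₀ = {x₁ + ⋯ + x_v - k} ∪ {xᵢ² - xᵢ}`. -/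
def G0 (σ : Type*) [Fintype σ] (k : ℕ) : Set (MvPolynomial σ ℂ) :=
  insert ((∑ i, MvPolynomial.X i) - MvPolynomial.C (k : ℂ))
    (Set.range fun i : σ => MvPolynomial.X i ^ 2 - MvPolynomial.X i)

/-- The trivial ideal `T = ⟨G₀⟩`. -/
def trivialIdeal (σ : Type*) [Fintype σ] (k : ℕ) : Ideal (MvPolynomial σ ℂ) :=
  Ideal.span (G0 σ k)

/-- `γ₁`: minimum total degree of a non-trivial polynomial in the ideal of the design. -/
def gamma1 [Fintype σ] [DecidableEq σ] (k : ℕ) (ℬ : Finset (Finset σ)) : ℕ :=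
  sInf {d : ℕ | ∃ f ∈ designIdeal ℬ, f ∉ trivialIdeal σ k ∧ f.totalDegree = d}

/-- `γ₂`: least `s` such that `I(ℬ)` is generated by polynomials of total degree `≤ s`. -/
def gamma2 [Fintype σ] [DecidableEq σ] (ℬ : Finset (Finset σ)) : ℕ :=
  sInf {s : ℕ | ∃ G : Set (MvPolynomial σ ℂ),
    (∀ g ∈ G, g.totalDegree ≤ s) ∧ Ideal.span G = designIdeal ℬ}

/-- `ℬ` is a `t`-`(v,k,lam)` design: all blocks have size `k` and every `t`-element
subset of the point set lies in exactly `lam` blocks. -/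
def IsDesign [DecidableEq σ] (ℬ : Finset (Finset σ)) (k t lam : ℕ) : Prop :=
  (∀ B ∈ ℬ, B.card = k) ∧
  ∀ T : Finset σ, T.card = t → (ℬ.filter fun B => T ⊆ B).card = lam

open MvPolynomial Finset

variable [Fintype σ] [DecidableEq σ]

/-- Indicator polynomial of the 0-1 point `charVec S`. -/
def chiPoly (S : Finset σ) : MvPolynomial σ ℂ :=
  (∏ i ∈ S, X i) * ∏ i ∈ Sᶜ, (1 - X i)

/-- The ideal generated by the `xᵢ² - xᵢ`. -/
def Qid (σ : Type*) [Fintype σ] : Ideal (MvPolynomial σ ℂ) :=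
  Ideal.span (Set.range fun i : σ => X i ^ 2 - X i)

lemma sum_chiPoly : ∑ S ∈ (Finset.univ : Finset σ).powerset, chiPoly S = 1 := by
  have h := Finset.prod_add (fun i : σ => X i) (fun i : σ => (1 : MvPolynomial σ ℂ) - X i)
    Finset.univ
  simp only [add_sub_cancel] at h
  simp only [Finset.prod_const_one] at h
  rw [h]
  apply Finset.sum_congr rfl
  intro S _
  rw [chiPoly, Finset.compl_eq_univ_sdiff]

lemma chiPoly_mul_X (S : Finset σ) (i : σ) :
    chiPoly S * X i - C (charVec S i) * chiPoly S ∈ Qid σ := by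
  by_cases hi : i ∈ S
  · have h1 : chiPoly S = X i * ((∏ j ∈ S.erase i, X j) * ∏ j ∈ Sᶜ, (1 - X j)) := by
      rw [chiPoly, ← Finset.mul_prod_erase S _ hi, mul_assoc]
    have h2 : chiPoly S * X i - C (charVec S i) * chiPoly S
        = (X i ^ 2 - X i) * ((∏ j ∈ S.erase i, X j) * ∏ j ∈ Sᶜ, (1 - X j)) := by
      rw [charVec]
      simp only [hi, if_pos]
      rw [map_one, h1]; ring
    rw [h2]
    exact Ideal.mul_mem_right _ _ (Ideal.subset_span ⟨i, rfl⟩)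
  · have hi' : i ∈ Sᶜ := Finset.mem_compl.2 hi
    have h1 : chiPoly S = (1 - X i) * ((∏ j ∈ S, X j) * ∏ j ∈ Sᶜ.erase i, (1 - X j)) := by
      rw [chiPoly, ← Finset.mul_prod_erase Sᶜ _ hi']; ring
    have h2 : chiPoly S * X i - C (charVec S i) * chiPoly S
        = -((X i ^ 2 - X i) * ((∏ j ∈ S, X j) * ∏ j ∈ Sᶜ.erase i, (1 - X j))) := by
      rw [charVec]
      simp only [hi, if_neg, not_false_iff, map_zero, zero_mul, sub_zero]
      rw [h1]; ring
    rw [h2]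
    exact neg_mem (Ideal.mul_mem_right _ _ (Ideal.subset_span ⟨i, rfl⟩))

lemma chiPoly_absorb (S : Finset σ) (f : MvPolynomial σ ℂ) :
    chiPoly S * f - C (eval (charVec S) f) * chiPoly S ∈ Qid σ := by
  induction f using MvPolynomial.induction_on with
  | C a => simp [mul_comm]
  | add p q hp hq =>
      have h := add_mem hp hq
      convert h using 1
      simp only [map_add]
      ring
  | mul_X p i hp =>
      have h2 := chiPoly_mul_X S i
      have h3 := Ideal.mul_mem_right (X i) _ hp
      have h4 := Ideal.mul_mem_left _ (C (eval (charVec S) p)) h2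
      have h := add_mem h3 h4
      convert h using 1
      simp only [map_mul, eval_X]
      ring

lemma eval_prod_X (S J : Finset σ) :
    eval (charVec S) (∏ i ∈ J, X i) = if J ⊆ S then 1 else 0 := by
  rw [map_prod]
  by_cases h : J ⊆ S
  · rw [if_pos h]
    apply Finset.prod_eq_one
    intro i hi
    simp [charVec, h hi]
  · rw [if_neg h]
    obtain ⟨i, hiJ, hiS⟩ := Finset.not_subset.1 h
    exact Finset.prod_eq_zero hiJ (by simp [charVec, hiS])

lemma eval_esym (S B : Finset σ) (t : ℕ) :
    eval (charVec S) (∑ J ∈ B.powersetCard t, ∏ i ∈ J, X i)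
      = (((B ∩ S).card.choose t : ℕ) : ℂ) := by
  rw [map_sum]
  simp only [eval_prod_X]
  rw [Finset.sum_boole]
  congr 1
  rw [← Finset.card_powersetCard]
  congr 1
  ext J
  simp only [Finset.mem_filter, Finset.mem_powersetCard, Finset.subset_inter_iff]
  tauto

lemma eval_sumX (S : Finset σ) :
    eval (charVec S) ((∑ i, X i : MvPolynomial σ ℂ)) = (S.card : ℂ) := by
  rw [map_sum]
  simp only [eval_X, charVec]
  rw [Finset.sum_ite_mem]
  simp

lemma mem_designIdeal_iff (ℬ : Finset (Finset σ)) (f : MvPolynomial σ ℂ) :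
    f ∈ designIdeal ℬ ↔ ∀ B ∈ ℬ, eval (charVec B) f = 0 := by
  simp [designIdeal, Ideal.mem_iInf, RingHom.mem_ker]

/-- If some member of an ideal `J ⊇ Qid` does not vanish at `charVec S`, then
`chiPoly S ∈ J`. -/
lemma chiPoly_mem (J : Ideal (MvPolynomial σ ℂ)) (hQ : Qid σ ≤ J) (S : Finset σ)
    (g : MvPolynomial σ ℂ) (hg : g ∈ J) (he : eval (charVec S) g ≠ 0) :
    chiPoly S ∈ J := by
  have h1 : chiPoly S * g - C (eval (charVec S) g) * chiPoly S ∈ J :=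
    hQ (chiPoly_absorb S g)
  have h2 : chiPoly S * g ∈ J := Ideal.mul_mem_left _ _ hg
  have h3 : C (eval (charVec S) g) * chiPoly S ∈ J := by
    have := sub_mem h2 h1
    simpa using this
  have h4 := Ideal.mul_mem_left _ (C (eval (charVec S) g)⁻¹) h3
  rwa [← mul_assoc, ← map_mul, inv_mul_cancel₀ he, map_one, one_mul] at h4

theorem steiner_system_ideal (v k t : ℕ) (ht : 2 ≤ t) (htk : t ≤ k) (hkv : k ≤ v)
    (ℬ : Finset (Finset (Fin v))) (hdes : IsDesign ℬ k t 1) (hne : ℬ.Nonempty)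
    (hnc : ℬ ≠ Finset.powersetCard k (Finset.univ : Finset (Fin v))) :
    designIdeal ℬ =
      Ideal.span (G0 (Fin v) k ∪
        {g | ∃ B ∈ ℬ, ∃ T : Finset (Fin v), T ⊆ B ∧ T.card = t ∧
          g = (∑ J ∈ B.powersetCard t, ∏ i ∈ J, MvPolynomial.X i) -
            MvPolynomial.C ((k.choose t : ℕ) : ℂ) * ∏ i ∈ T, MvPolynomial.X i}) ∧
    gamma2 ℬ ≤ t := by
  set Gset : Set (MvPolynomial (Fin v) ℂ) := G0 (Fin v) k ∪
        {g | ∃ B ∈ ℬ, ∃ T : Finset (Fin v), T ⊆ B ∧ T.card = t ∧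
          g = (∑ J ∈ B.powersetCard t, ∏ i ∈ J, MvPolynomial.X i) -
            MvPolynomial.C ((k.choose t : ℕ) : ℂ) * ∏ i ∈ T, MvPolynomial.X i} with hGset
  set J : Ideal (MvPolynomial (Fin v) ℂ) := Ideal.span Gset with hJ
  -- distinct blocks intersect in fewer than t points
  have hinter : ∀ B ∈ ℬ, ∀ B' ∈ ℬ, B ≠ B' → (B ∩ B').card < t := by
    intro B hB B' hB' hne'
    by_contra hge
    push_neg at hge
    obtain ⟨T', hT'sub, hT'card⟩ := Finset.exists_subset_card_eq hge
    have hpair : ({B, B'} : Finset (Finset (Fin v))) ⊆ ℬ.filter fun C => T' ⊆ C := by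
      intro C hC
      simp only [Finset.mem_insert, Finset.mem_singleton] at hC
      rcases hC with rfl | rfl
      · exact Finset.mem_filter.2 ⟨hB, hT'sub.trans Finset.inter_subset_left⟩
      · exact Finset.mem_filter.2 ⟨hB', hT'sub.trans Finset.inter_subset_right⟩
    have h2 : ({B, B'} : Finset (Finset (Fin v))).card = 2 :=
      Finset.card_pair hne'
    have := Finset.card_le_card hpair
    rw [h2, hdes.2 T' hT'card] at this
    omega
  -- easy inclusion : J ≤ designIdeal
  have heasy : J ≤ designIdeal ℬ := by
    rw [hJ, Ideal.span_le]
    intro g hg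
    rw [SetLike.mem_coe, mem_designIdeal_iff]
    intro B' hB'
    rcases hg with hg | hg
    · rcases hg with hg | ⟨i, rfl⟩
      · rw [hg]
        rw [map_sub, eval_sumX, eval_C, hdes.1 B' hB']
        ring
      · simp only [map_sub, map_pow, eval_X, charVec]
        split_ifs <;> ring
    · obtain ⟨B, hB, T, hTB, hTcard, rfl⟩ := hg
      rw [map_sub, eval_esym, map_mul, eval_C, eval_prod_X]
      by_cases hBB' : B = B'
      · subst hBB'
        rw [Finset.inter_self, hdes.1 B hB, if_pos hTB]
        ring
      · have hlt := hinter B hB B' hB' hBB'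
        have hTnB' : ¬ T ⊆ B' := by
          intro hsub
          have : T ⊆ B ∩ B' := Finset.subset_inter hTB hsub
          have := Finset.card_le_card this
          omega
        rw [if_neg hTnB', Nat.choose_eq_zero_of_lt hlt]
        simp
  -- Q ≤ J
  have hQJ : Qid (Fin v) ≤ J := by
    rw [hJ, Qid]
    apply Ideal.span_mono
    intro g hg
    exact Or.inl (Set.mem_insert_iff.2 (Or.inr hg))
  -- for S not a block, chiPoly S ∈ J
  have hchi : ∀ S : Finset (Fin v), S ∉ ℬ → chiPoly S ∈ J := by
    intro S hS
    by_cases hcard : S.card = k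
    · -- find a block through a t-subset of S
      obtain ⟨T₀, hT₀S, hT₀card⟩ :=
        Finset.exists_subset_card_eq (show t ≤ S.card by omega)
      obtain ⟨B, hBeq⟩ := Finset.card_eq_one.1 (hdes.2 T₀ hT₀card)
      have hBmem : B ∈ ℬ.filter fun C => T₀ ⊆ C := by rw [hBeq]; exact Finset.mem_singleton_self B
      rw [Finset.mem_filter] at hBmem
      obtain ⟨hBℬ, hT₀B⟩ := hBmem
      set g : MvPolynomial (Fin v) ℂ :=
        (∑ J ∈ B.powersetCard t, ∏ i ∈ J, MvPolynomial.X i) -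
          MvPolynomial.C ((k.choose t : ℕ) : ℂ) * ∏ i ∈ T₀, MvPolynomial.X i with hgdef
      have hgG : g ∈ Gset := Or.inr ⟨B, hBℬ, T₀, hT₀B, hT₀card, rfl⟩
      have hBk : B.card = k := hdes.1 B hBℬ
      have hmlt : (B ∩ S).card < k := by
        have hle : (B ∩ S).card ≤ k := by
          have := Finset.card_le_card (Finset.inter_subset_left : B ∩ S ⊆ B)
          omega
        rcases lt_or_eq_of_le hle with h | h
        · exact h
        · exfalso
          have hBsub : B ⊆ S := by
            have : B ∩ S = B :=
              Finset.eq_of_subset_of_card_le Finset.inter_subset_left (by omega)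
            rw [← this]; exact Finset.inter_subset_right
          have : B = S := Finset.eq_of_subset_of_card_le hBsub (by omega)
          exact hS (this ▸ hBℬ)
      have hchoose : (B ∩ S).card.choose t < k.choose t := by
        have h1 : (B ∩ S).card.choose t ≤ (k - 1).choose t :=
          Nat.choose_le_choose t (by omega)
        have h2 : (k - 1).choose t < k.choose t := by
          have hk : k = (k - 1) + 1 := by omega
          have ht' : t = (t - 1) + 1 := by omega
          have hcs : ((k - 1) + 1).choose ((t - 1) + 1)
              = (k - 1).choose (t - 1) + (k - 1).choose ((t - 1) + 1) :=
            Nat.choose_succ_succ _ _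
          have hpos : 0 < (k - 1).choose (t - 1) := Nat.choose_pos (by omega)
          rw [← hk, ← ht'] at hcs
          omega
        omega
      have he : eval (charVec S) g ≠ 0 := by
        rw [hgdef, map_sub, eval_esym, map_mul, eval_C, eval_prod_X, if_pos hT₀S, mul_one]
        rw [sub_ne_zero]
        exact_mod_cast Nat.ne_of_lt hchoose
      exact chiPoly_mem J hQJ S g (Ideal.subset_span hgG) he
    · -- cardinality differs from k
      set g : MvPolynomial (Fin v) ℂ := (∑ i, MvPolynomial.X i) - MvPolynomial.C (k : ℂ)
        with hgdef
      have hgG : g ∈ Gset := Or.inl (Set.mem_insert _ _)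
      have he : eval (charVec S) g ≠ 0 := by
        rw [hgdef, map_sub, eval_sumX, eval_C, sub_ne_zero]
        exact_mod_cast hcard
      exact chiPoly_mem J hQJ S g (Ideal.subset_span hgG) he
  -- hard inclusion
  have hhard : designIdeal ℬ ≤ J := by
    intro f hf
    have hrep : f = ∑ S ∈ (Finset.univ : Finset (Fin v)).powerset, f * chiPoly S := by
      rw [← Finset.mul_sum, sum_chiPoly, mul_one]
    rw [hrep]
    apply Ideal.sum_mem
    intro S _
    by_cases hSB : S ∈ ℬ
    · have h0 : eval (charVec S) f = 0 := (mem_designIdeal_iff ℬ f).1 hf S hSB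
      have h1 := chiPoly_absorb S f
      rw [h0, map_zero, zero_mul, sub_zero] at h1
      have : chiPoly S * f ∈ J := hQJ h1
      rwa [mul_comm] at this
    · exact Ideal.mul_mem_left _ _ (hchi S hSB)
  have hmain : designIdeal ℬ = J := le_antisymm hhard heasy
  refine ⟨hmain, ?_⟩
  -- gamma2 bound
  apply Nat.sInf_le
  refine ⟨Gset, ?_, hmain.symm⟩
  intro g hg
  rcases hg with hg | hg
  · rcases hg with hg | ⟨i, rfl⟩
    · rw [hg]
      calc ((∑ i, MvPolynomial.X i : MvPolynomial (Fin v) ℂ)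
            - MvPolynomial.C (k : ℂ)).totalDegree
          ≤ max (∑ i, MvPolynomial.X i : MvPolynomial (Fin v) ℂ).totalDegree
              (MvPolynomial.C (k : ℂ) : MvPolynomial (Fin v) ℂ).totalDegree :=
            MvPolynomial.totalDegree_sub _ _
        _ ≤ t := by
            apply max_le
            · calc (∑ i, MvPolynomial.X i : MvPolynomial (Fin v) ℂ).totalDegree
                  ≤ Finset.univ.sup fun i : Fin v => (MvPolynomial.X i
                      : MvPolynomial (Fin v) ℂ).totalDegree :=
                  MvPolynomial.totalDegree_finset_sum _ _
                _ ≤ t := by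
                    apply Finset.sup_le
                    intro i _
                    rw [MvPolynomial.totalDegree_X]
                    omega
            · rw [MvPolynomial.totalDegree_C]; omega
    · show (MvPolynomial.X i ^ 2 - MvPolynomial.X i : MvPolynomial (Fin v) ℂ).totalDegree ≤ t
      calc (MvPolynomial.X i ^ 2 - MvPolynomial.X i : MvPolynomial (Fin v) ℂ).totalDegree
          ≤ max (MvPolynomial.X i ^ 2 : MvPolynomial (Fin v) ℂ).totalDegree
              (MvPolynomial.X i : MvPolynomial (Fin v) ℂ).totalDegree :=
            MvPolynomial.totalDegree_sub _ _
        _ ≤ t := by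
            apply max_le
            · rw [MvPolynomial.totalDegree_X_pow]; omega
            · rw [MvPolynomial.totalDegree_X]; omega
  · obtain ⟨B, hB, T, hTB, hTcard, rfl⟩ := hg
    have hprod : ∀ J : Finset (Fin v), J.card = t →
        (∏ i ∈ J, MvPolynomial.X i : MvPolynomial (Fin v) ℂ).totalDegree ≤ t := by
      intro Jf hJf
      calc (∏ i ∈ Jf, MvPolynomial.X i : MvPolynomial (Fin v) ℂ).totalDegree
          ≤ ∑ i ∈ Jf, (MvPolynomial.X i : MvPolynomial (Fin v) ℂ).totalDegree :=
            MvPolynomial.totalDegree_finset_prod _ _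
        _ = Jf.card := by simp [MvPolynomial.totalDegree_X]
        _ ≤ t := by omega
    calc ((∑ Jf ∈ B.powersetCard t, ∏ i ∈ Jf, MvPolynomial.X i) -
          MvPolynomial.C ((k.choose t : ℕ) : ℂ) * ∏ i ∈ T, MvPolynomial.X i).totalDegree
        ≤ max (∑ Jf ∈ B.powersetCard t, ∏ i ∈ Jf, MvPolynomial.X i
              : MvPolynomial (Fin v) ℂ).totalDegree
            (MvPolynomial.C ((k.choose t : ℕ) : ℂ) * ∏ i ∈ T, MvPolynomial.X i
              : MvPolynomial (Fin v) ℂ).totalDegree :=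
          MvPolynomial.totalDegree_sub _ _
      _ ≤ t := by
          apply max_le
          · calc (∑ Jf ∈ B.powersetCard t, ∏ i ∈ Jf, MvPolynomial.X i
                  : MvPolynomial (Fin v) ℂ).totalDegree
                ≤ (B.powersetCard t).sup fun Jf =>
                    (∏ i ∈ Jf, MvPolynomial.X i : MvPolynomial (Fin v) ℂ).totalDegree :=
                  MvPolynomial.totalDegree_finset_sum _ _
              _ ≤ t := by
                  apply Finset.sup_le
                  intro Jf hJf
                  exact hprod Jf (Finset.mem_powersetCard.1 hJf).2
          · calc (MvPolynomial.C ((k.choose t : ℕ) : ℂ) * ∏ i ∈ T, MvPolynomial.X i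
                  : MvPolynomial (Fin v) ℂ).totalDegree
                ≤ (MvPolynomial.C ((k.choose t : ℕ) : ℂ)
                    : MvPolynomial (Fin v) ℂ).totalDegree +
                  (∏ i ∈ T, MvPolynomial.X i : MvPolynomial (Fin v) ℂ).totalDegree :=
                  MvPolynomial.totalDegree_mul _ _
              _ ≤ t := by
                  rw [MvPolynomial.totalDegree_C, zero_add]
                  exact hprod T hTcard
end
end

section
/- Let ℬ be a symmetric 2-(v,k,λ) design on X = {1,…,v}, i.e., a 2-(v,k,λ) design with |ℬ| = v, where 1 ≤ λ < k ≤ v − 2 (so ℬ is non-empty and not equal to the family of all k-subsets of X). For each pair of distinct points i, j ∈ X define f_{i,j} = (k − λ)·x_i·x_j − Σ_{B ∈ ℬ, i,j ∈ B} x^{B,1} + λ². Then: (i) I(ℬ) equals the ideal generated by G_0 ∪ { f_{i,j} : i ≠ j in X }; (ii) γ1(ℬ) = γ2(ℬ) = 2; (iii) the cosets { x_i + I(ℬ) : 1 ≤ i ≤ v } form a ℂ-vector-space basis of the quotient ring ℂ[x_1,…,x_v]/I(ℬ). -/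
noncomputable section

variable {σ : Type*}

open MvPolynomial Finset

namespace SymAux
set_option linter.unusedSectionVars false



lemma le_choose {n j : ℕ} (h1 : 1 ≤ j) (h2 : j < n) : n ≤ n.choose j := by
  induction n generalizing j with
  | zero => omega
  | succ n ih =>
    rcases eq_or_lt_of_le h1 with rfl | hj2
    · simp
    rcases eq_or_lt_of_le (Nat.lt_succ_iff.mp h2) with rfl | hjn
    · rw [Nat.choose_succ_self_right]
    · obtain ⟨j, rfl⟩ : ∃ m, j = m + 1 := ⟨j - 1, by omega⟩
      rw [Nat.choose_succ_succ']
      have p1 : 1 ≤ n.choose j := Nat.choose_pos (by omega)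
      have p2 := ih (j := j + 1) (by omega) (by omega)
      omega

lemma choose_gt {n j : ℕ} (h1 : 2 ≤ j) (h2 : j ≤ n - 2) : n < n.choose j := by
  have hn : j + 2 ≤ n := by omega
  have e : n.choose j = (n-1).choose (j-1) + (n-1).choose j := by
    obtain ⟨m, rfl⟩ : ∃ m, n = m + 1 := ⟨n - 1, by omega⟩
    obtain ⟨i, rfl⟩ : ∃ i, j = i + 1 := ⟨j - 1, by omega⟩
    rw [Nat.choose_succ_succ']
    simp
  have p1 : n - 1 ≤ (n-1).choose (j-1) := le_choose (by omega) (by omega)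
  have p2 : n - 1 ≤ (n-1).choose j := le_choose (by omega) (by omega)
  omega


variable {v k lam : ℕ} {ℬ : Finset (Finset (Fin v))}

lemma pair_count (hd2 : ∀ T : Finset (Fin v), T.card = 2 → (ℬ.filter fun B => T ⊆ B).card = lam)
    {i j : Fin v} (hij : i ≠ j) :
    (ℬ.filter fun B => i ∈ B ∧ j ∈ B).card = lam := by
  have h := hd2 {i, j} (by rw [card_insert_of_notMem (by simpa), card_singleton])
  rw [← h]
  apply congrArg
  apply filter_congr
  intro B _
  simp [insert_subset_iff]

lemma card_mem_filter (B : Finset (Fin v)) :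
    (∑ i : Fin v, if i ∈ B then 1 else 0) = B.card := by
  rw [← card_filter]
  congr 1
  ext x; simp

/-- double counting: incidences between blocks through `i` and other points -/
lemma double_count (i : Fin v) :
    ∑ B ∈ ℬ.filter (i ∈ ·), (B.card - 1)
      = ∑ j ∈ univ.erase i, (ℬ.filter fun B => i ∈ B ∧ j ∈ B).card := by
  have step1 : ∀ B ∈ ℬ.filter (i ∈ ·), (B.card - 1) = ((univ.erase i).filter (· ∈ B)).card := by
    intro B hB
    rw [mem_filter] at hB
    have : (univ.erase i).filter (· ∈ B) = B.erase i := by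
      ext x; simp [mem_erase, and_comm]
    rw [this, card_erase_of_mem hB.2]
  rw [Finset.sum_congr rfl step1]
  simp_rw [card_filter]
  rw [Finset.sum_comm]
  apply Finset.sum_congr rfl
  intro j _
  rw [Finset.sum_filter]
  apply Finset.sum_congr rfl
  intro B _
  by_cases h1 : i ∈ B <;> by_cases h2 : j ∈ B <;> simp [h1, h2]

lemma rep_count (hd1 : ∀ B ∈ ℬ, B.card = k)
    (hd2 : ∀ T : Finset (Fin v), T.card = 2 → (ℬ.filter fun B => T ⊆ B).card = lam)
    (i : Fin v) :
    (ℬ.filter (i ∈ ·)).card * (k - 1) = (v - 1) * lam := by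
  have h := double_count (ℬ := ℬ) i
  have e1 : ∑ B ∈ ℬ.filter (i ∈ ·), (B.card - 1) = (ℬ.filter (i ∈ ·)).card * (k - 1) := by
    rw [Finset.sum_congr rfl (g := fun _ => k - 1) (fun B hB => by
      rw [mem_filter] at hB
      rw [hd1 B hB.1]), Finset.sum_const, smul_eq_mul]
  have e2 : ∑ j ∈ univ.erase i, (ℬ.filter fun B => i ∈ B ∧ j ∈ B).card = (v - 1) * lam := by
    rw [Finset.sum_congr rfl (g := fun _ => lam)
        (fun j hj => pair_count hd2 (by simp at hj; exact (Ne.symm hj))),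
      Finset.sum_const, smul_eq_mul, card_erase_of_mem (mem_univ i), card_univ, Fintype.card_fin]
  rw [← e1, ← e2, h]

lemma total_count (hd1 : ∀ B ∈ ℬ, B.card = k) (hsym : ℬ.card = v) :
    ∑ i : Fin v, (ℬ.filter (i ∈ ·)).card = v * k := by
  simp_rw [card_filter]
  rw [Finset.sum_comm]
  rw [Finset.sum_congr rfl (fun B hB => (card_mem_filter B).trans (hd1 B hB)),
    Finset.sum_const, smul_eq_mul, hsym]

lemma rep_eq_k (hlam : 1 ≤ lam) (hlk : lam < k) (hkv : k ≤ v - 2)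
    (hd1 : ∀ B ∈ ℬ, B.card = k)
    (hd2 : ∀ T : Finset (Fin v), T.card = 2 → (ℬ.filter fun B => T ⊆ B).card = lam)
    (hsym : ℬ.card = v) (i : Fin v) :
    (ℬ.filter (i ∈ ·)).card = k := by
  have hk2 : 2 ≤ k := by omega
  have hv : k + 2 ≤ v := by omega
  have heq : ∀ j : Fin v, (ℬ.filter (j ∈ ·)).card = (ℬ.filter (i ∈ ·)).card := by
    intro j
    have h1 := rep_count hd1 hd2 i
    have h2 := rep_count hd1 hd2 j
    exact Nat.eq_of_mul_eq_mul_right (by omega) (h2.trans h1.symm)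
  have ht := total_count hd1 hsym
  rw [Finset.sum_congr rfl (fun j _ => heq j), Finset.sum_const, smul_eq_mul,
    card_univ, Fintype.card_fin] at ht
  exact Nat.eq_of_mul_eq_mul_left (by omega) ht

lemma fisher (hlam : 1 ≤ lam) (hlk : lam < k) (hkv : k ≤ v - 2)
    (hd1 : ∀ B ∈ ℬ, B.card = k)
    (hd2 : ∀ T : Finset (Fin v), T.card = 2 → (ℬ.filter fun B => T ⊆ B).card = lam)
    (hsym : ℬ.card = v) :
    lam * (v - 1) = k * (k - 1) := by
  have hv : 4 ≤ v := by omega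
  have h := rep_count hd1 hd2 (⟨0, by omega⟩ : Fin v)
  rw [rep_eq_k hlam hlk hkv hd1 hd2 hsym ⟨0, by omega⟩] at h
  rw [mul_comm]
  exact h.symm


variable {v k lam : ℕ} {ℬ : Finset (Finset (Fin v))}

lemma cast_mul_pred (n : ℕ) : ((n * (n - 1) : ℕ) : ℤ) = (n : ℤ) * ((n : ℤ) - 1) := by
  cases n with
  | zero => simp
  | succ m => push_cast [Nat.succ_sub_one]; ring

lemma sum_erase_card {α : Type*} [DecidableEq α] (s : Finset α) :
    ∑ i ∈ s, (s.erase i).card = s.card * (s.card - 1) := by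
  rw [Finset.sum_congr rfl (g := fun _ => s.card - 1) (fun i hi => card_erase_of_mem hi),
    Finset.sum_const, smul_eq_mul]

section
variable (hlam : 1 ≤ lam) (hlk : lam < k) (hkv : k ≤ v - 2)
    (hd1 : ∀ B ∈ ℬ, B.card = k)
    (hd2 : ∀ T : Finset (Fin v), T.card = 2 → (ℬ.filter fun B => T ⊆ B).card = lam)
    (hsym : ℬ.card = v)
include hlam hlk hkv hd1 hd2 hsym

lemma inter_sum1 {B₀ : Finset (Fin v)} (hB₀ : B₀ ∈ ℬ) :
    ∑ B ∈ ℬ.erase B₀, (B₀.filter (· ∈ B)).card = k * (k - 1) := by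
  simp_rw [card_filter]
  rw [Finset.sum_comm]
  have h1 : ∀ i ∈ B₀, (∑ B ∈ ℬ.erase B₀, if i ∈ B then 1 else 0) = k - 1 := by
    intro i hi
    rw [← card_filter]
    have : (ℬ.erase B₀).filter (i ∈ ·) = (ℬ.filter (i ∈ ·)).erase B₀ := by
      ext B; simp [mem_erase, mem_filter]; tauto
    rw [this, card_erase_of_mem (by rw [mem_filter]; exact ⟨hB₀, hi⟩),
      rep_eq_k hlam hlk hkv hd1 hd2 hsym i]
  rw [Finset.sum_congr rfl h1, Finset.sum_const, smul_eq_mul, hd1 B₀ hB₀]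

lemma inter_sum2 {B₀ : Finset (Fin v)} (hB₀ : B₀ ∈ ℬ) :
    ∑ B ∈ ℬ.erase B₀, (B₀.filter (· ∈ B)).card * ((B₀.filter (· ∈ B)).card - 1)
      = k * (k - 1) * (lam - 1) := by
  have key : ∀ B : Finset (Fin v),
      (B₀.filter (· ∈ B)).card * ((B₀.filter (· ∈ B)).card - 1)
        = ∑ i ∈ B₀, ∑ j ∈ B₀.erase i, (if i ∈ B ∧ j ∈ B then 1 else 0) := by
    intro B
    rw [← sum_erase_card (B₀.filter (· ∈ B)), Finset.sum_filter]
    apply Finset.sum_congr rfl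
    intro i _
    by_cases hiB : i ∈ B
    · simp only [hiB, if_true]
      have : (B₀.filter (· ∈ B)).erase i = (B₀.erase i).filter (· ∈ B) := by
        ext x; simp [mem_erase, mem_filter]; tauto
      rw [this, card_filter]
      apply Finset.sum_congr rfl
      intro j _
      simp [hiB]
    · simp only [hiB, if_false]
      rw [Finset.sum_congr rfl (g := fun _ => 0) (fun j _ => by simp [hiB]), Finset.sum_const]
      simp
  simp_rw [key]
  rw [Finset.sum_comm]
  have h1 : ∀ i ∈ B₀, (∑ B ∈ ℬ.erase B₀, ∑ j ∈ B₀.erase i, if i ∈ B ∧ j ∈ B then 1 else 0)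
      = (k - 1) * (lam - 1) := by
    intro i hi
    rw [Finset.sum_comm]
    have h2 : ∀ j ∈ B₀.erase i,
        (∑ B ∈ ℬ.erase B₀, if i ∈ B ∧ j ∈ B then 1 else 0) = lam - 1 := by
      intro j hj
      rw [mem_erase] at hj
      rw [← card_filter]
      have : (ℬ.erase B₀).filter (fun B => i ∈ B ∧ j ∈ B)
          = (ℬ.filter (fun B => i ∈ B ∧ j ∈ B)).erase B₀ := by
        ext B; simp [mem_erase, mem_filter]; tauto
      rw [this, card_erase_of_mem (by rw [mem_filter]; exact ⟨hB₀, hi, hj.2⟩),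
        pair_count hd2 (Ne.symm hj.1)]
    rw [Finset.sum_congr rfl h2, Finset.sum_const, smul_eq_mul,
      card_erase_of_mem hi, hd1 B₀ hB₀]
  rw [Finset.sum_congr rfl h1, Finset.sum_const, smul_eq_mul, hd1 B₀ hB₀, mul_assoc]

/-- Any two distinct blocks of a symmetric design intersect in `lam` points. -/
lemma inter_card {B₀ B : Finset (Fin v)} (hB₀ : B₀ ∈ ℬ) (hB : B ∈ ℬ) (hne : B ≠ B₀) :
    (B₀.filter (· ∈ B)).card = lam := by
  have hv : 4 ≤ v := by omega
  set D := ℬ.erase B₀ with hD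
  have hcD : D.card = v - 1 := by rw [hD, card_erase_of_mem hB₀, hsym]
  have hfish : ((lam : ℤ)) * ((v : ℤ) - 1) = (k : ℤ) * ((k : ℤ) - 1) := by
    have := fisher hlam hlk hkv hd1 hd2 hsym
    have h1 : ((lam * (v-1) : ℕ) : ℤ) = ((k * (k-1) : ℕ) : ℤ) :=
      congrArg (fun n : ℕ => (n : ℤ)) this
    push_cast [Nat.cast_sub (by omega : 1 ≤ v), Nat.cast_sub (by omega : 1 ≤ k)] at h1
    exact h1
  have hzero : ∑ B' ∈ D, (((B₀.filter (· ∈ B')).card : ℤ) - lam) ^ 2 = 0 := by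
    have expand : ∀ B' : Finset (Fin v),
        (((B₀.filter (· ∈ B')).card : ℤ) - lam) ^ 2
          = ((((B₀.filter (· ∈ B')).card * ((B₀.filter (· ∈ B')).card - 1) : ℕ)) : ℤ)
            + (1 - 2 * lam) * ((B₀.filter (· ∈ B')).card : ℕ)
            + (lam : ℤ) ^ 2 := by
      intro B'
      rw [cast_mul_pred]
      ring
    rw [Finset.sum_congr rfl (fun B' _ => expand B'), Finset.sum_add_distrib,
      Finset.sum_add_distrib, Finset.sum_const, ← Finset.mul_sum]
    rw [← Nat.cast_sum, ← Nat.cast_sum, inter_sum1 hlam hlk hkv hd1 hd2 hsym hB₀,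
      inter_sum2 hlam hlk hkv hd1 hd2 hsym hB₀, hcD]
    have c1 : ((k * (k-1) * (lam - 1) : ℕ) : ℤ) = (k:ℤ) * ((k:ℤ)-1) * ((lam:ℤ)-1) := by
      push_cast [Nat.cast_sub (by omega : 1 ≤ k), Nat.cast_sub (by omega : 1 ≤ lam)]
      ring
    have c2 : ((k * (k-1) : ℕ) : ℤ) = (k:ℤ) * ((k:ℤ)-1) := by
      push_cast [Nat.cast_sub (by omega : 1 ≤ k)]; ring
    have c3 : ((v - 1 : ℕ) : ℤ) = (v:ℤ) - 1 := by
      push_cast [Nat.cast_sub (by omega : 1 ≤ v)]; ring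
    rw [c1, c2, nsmul_eq_mul, c3]
    nlinarith [hfish]
  have := (Finset.sum_eq_zero_iff_of_nonneg (fun B' _ => sq_nonneg _)).mp hzero B
    (by rw [hD, mem_erase]; exact ⟨hne, hB⟩)
  have h2 : ((B₀.filter (· ∈ B)).card : ℤ) = lam := by nlinarith [this]
  exact_mod_cast h2

lemma linear_solve (a : Fin v → ℂ) (c : ℂ)
    (h : ∀ B ∈ ℬ, ∑ i ∈ B, a i = c) (j : Fin v) : a j = c / k := by
  have hk0 : (k : ℂ) ≠ 0 := Nat.cast_ne_zero.mpr (by omega)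
  have hkl : (k : ℂ) - lam ≠ 0 := by
    rw [sub_ne_zero]
    exact fun hh => absurd (Nat.cast_injective hh) (by omega)
  have hfishC : (lam : ℂ) * ((v : ℂ) - 1) = (k : ℂ) * ((k : ℂ) - 1) := by
    have hn := fisher hlam hlk hkv hd1 hd2 hsym
    have h1 : ((lam * (v-1) : ℕ) : ℂ) = ((k * (k-1) : ℕ) : ℂ) :=
      congrArg (fun n : ℕ => (n : ℂ)) hn
    push_cast [Nat.cast_sub (by omega : 1 ≤ v), Nat.cast_sub (by omega : 1 ≤ k)] at h1
    exact h1
  set S := ∑ i : Fin v, a i with hS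
  have key : ∀ j : Fin v, (k : ℂ) * a j + (lam : ℂ) * (S - a j) = (k : ℂ) * c := by
    intro j
    have e1 : ∀ i : Fin v, ((ℬ.filter fun B => j ∈ B ∧ i ∈ B).card : ℂ) * a i
        = ∑ B ∈ ℬ, if j ∈ B ∧ i ∈ B then a i else 0 := by
      intro i
      rw [← Finset.sum_filter, Finset.sum_const, nsmul_eq_mul]
    have e2 : ∀ B ∈ ℬ, (∑ i : Fin v, if j ∈ B ∧ i ∈ B then a i else 0)
        = (if j ∈ B then c else 0) := by
      intro B hB
      by_cases hj : j ∈ B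
      · simp only [hj, true_and, if_true]
        rw [← h B hB, Finset.sum_ite_mem, univ_inter]
      · simp [hj]
    have main : ∑ i : Fin v, ((ℬ.filter fun B => j ∈ B ∧ i ∈ B).card : ℂ) * a i
        = (k : ℂ) * c := by
      rw [Finset.sum_congr rfl (fun i _ => e1 i), Finset.sum_comm,
        Finset.sum_congr rfl e2, ← Finset.sum_filter, Finset.sum_const, nsmul_eq_mul]
      congr 1
      rw [rep_eq_k hlam hlk hkv hd1 hd2 hsym j]
    rw [← main]
    rw [← Finset.add_sum_erase _ _ (mem_univ j)]
    have cj : ((ℬ.filter fun B => j ∈ B ∧ j ∈ B).card : ℂ) = k := by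
      have : (ℬ.filter fun B => j ∈ B ∧ j ∈ B) = ℬ.filter (j ∈ ·) := by
        apply filter_congr; intro B _; simp
      rw [this, rep_eq_k hlam hlk hkv hd1 hd2 hsym j]
    have crest : ∀ i ∈ univ.erase j, ((ℬ.filter fun B => j ∈ B ∧ i ∈ B).card : ℂ) * a i
        = (lam : ℂ) * a i := by
      intro i hi
      rw [mem_erase] at hi
      rw [pair_count hd2 (fun hh => hi.1 (hh.symm))]
    rw [cj, Finset.sum_congr rfl crest, ← Finset.mul_sum,
      Finset.sum_erase_eq_sub (mem_univ j), ← hS]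
  have hSsum : (k : ℂ) * (k : ℂ) * S = (v : ℂ) * ((k : ℂ) * c) := by
    have hsumkey := Finset.sum_congr rfl (fun j (_ : j ∈ univ) => key j)
    rw [Finset.sum_add_distrib, ← Finset.mul_sum, ← Finset.mul_sum, Finset.sum_sub_distrib,
      Finset.sum_const, Finset.sum_const, card_univ, Fintype.card_fin, ← hS] at hsumkey
    have : (k:ℂ) * S + (lam:ℂ) * ((v:ℂ) * S - S) = (v:ℂ) * ((k:ℂ)*c) := by
      simpa [nsmul_eq_mul] using hsumkey
    linear_combination this - S * hfishC
  have hSk : S * (k : ℂ) = (v : ℂ) * c := by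
    apply mul_left_cancel₀ hk0
    linear_combination hSsum
  have hj := key j
  have goal2 : (((k:ℂ) - lam) * k) * a j = (((k:ℂ) - lam) * k) * (c / k) := by
    have hc : (((k:ℂ) - lam) * k) * (c / k) = ((k:ℂ) - lam) * c := by
      field_simp
    rw [hc]
    linear_combination (k:ℂ) * hj - (lam:ℂ) * hSk - c * hfishC
  exact mul_left_cancel₀ (mul_ne_zero hkl hk0) goal2

end
end SymAux

namespace SymPoly
set_option linter.unusedSectionVars false
set_option linter.unusedVariables false

variable {v k lam : ℕ} {ℬ : Finset (Finset (Fin v))}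
set_option linter.unusedSectionVars false

/-- the set of quadratic generators -/
def fij (ℬ : Finset (Finset (Fin v))) (k lam : ℕ) (i j : Fin v) : MvPolynomial (Fin v) ℂ :=
  MvPolynomial.C ((k : ℂ) - (lam : ℂ)) * (MvPolynomial.X i * MvPolynomial.X j) -
    (∑ B ∈ ℬ.filter (fun B => i ∈ B ∧ j ∈ B), ∑ h ∈ B, MvPolynomial.X h) +
    MvPolynomial.C ((lam : ℂ) ^ 2)

def fSet (ℬ : Finset (Finset (Fin v))) (k lam : ℕ) : Set (MvPolynomial (Fin v) ℂ) :=
  {f | ∃ i j : Fin v, i ≠ j ∧ f = fij ℬ k lam i j}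

def bigIdeal (ℬ : Finset (Finset (Fin v))) (k lam : ℕ) : Ideal (MvPolynomial (Fin v) ℂ) :=
  Ideal.span (G0 (Fin v) k ∪ fSet ℬ k lam)

lemma mem_designIdeal_iff {f : MvPolynomial (Fin v) ℂ} :
    f ∈ designIdeal ℬ ↔ ∀ B ∈ ℬ, eval (charVec B) f = 0 := by
  simp [designIdeal, Ideal.mem_iInf, RingHom.mem_ker]

lemma eval_sum_X (S B : Finset (Fin v)) :
    eval (charVec S) (∑ h ∈ B, X h) = ((B.filter (· ∈ S)).card : ℂ) := by
  rw [map_sum, ← Finset.sum_boole]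
  apply Finset.sum_congr rfl
  intro h _
  rw [eval_X]
  rfl

lemma eval_G0 {S : Finset (Fin v)} (hS : S.card = k) {g : MvPolynomial (Fin v) ℂ}
    (hg : g ∈ G0 (Fin v) k) : eval (charVec S) g = 0 := by
  rcases hg with rfl | ⟨i, rfl⟩
  · rw [map_sub, eval_C]
    have : (∑ i : Fin v, X (R := ℂ) i) = ∑ h ∈ (univ : Finset (Fin v)), X h := rfl
    rw [this, eval_sum_X]
    have : (univ : Finset (Fin v)).filter (· ∈ S) = S := by ext x; simp
    rw [this, hS, sub_self]
  · rw [map_sub, map_pow, eval_X]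
    unfold charVec
    by_cases h : i ∈ S <;> simp [h]

-- axioms standing in for SymAux results (replaced at assembly)
section
variable (hlam : 1 ≤ lam) (hlk : lam < k) (hkv : k ≤ v - 2)
    (hd1 : ∀ B ∈ ℬ, B.card = k)
    (hd2 : ∀ T : Finset (Fin v), T.card = 2 → (ℬ.filter fun B => T ⊆ B).card = lam)
    (hsym : ℬ.card = v)
include hlam hlk hkv hd1 hd2 hsym

lemma eval_fij {i j : Fin v} (hij : i ≠ j) {B : Finset (Fin v)} (hB : B ∈ ℬ) :
    eval (charVec B) (fij ℬ k lam i j) = 0 := by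
  unfold fij
  rw [map_add, map_sub, map_mul, map_mul, eval_C, eval_C, eval_X, eval_X, map_sum]
  have hbig : ∀ B' ∈ ℬ.filter (fun B' => i ∈ B' ∧ j ∈ B'),
      eval (charVec B) (∑ h ∈ B', X h) = ((B'.filter (· ∈ B)).card : ℂ) :=
    fun B' _ => eval_sum_X B B'
  rw [Finset.sum_congr rfl hbig]
  set ℱ := ℬ.filter (fun B' => i ∈ B' ∧ j ∈ B') with hℱ
  have hcardℱ : ℱ.card = lam := SymAux.pair_count hd2 hij
  by_cases hmem : i ∈ B ∧ j ∈ B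
  · have hBℱ : B ∈ ℱ := by rw [hℱ, mem_filter]; exact ⟨hB, hmem⟩
    have hsplit : ∑ B' ∈ ℱ, ((B'.filter (· ∈ B)).card : ℂ)
        = ((B.filter (· ∈ B)).card : ℂ) + ∑ B' ∈ ℱ.erase B, ((B'.filter (· ∈ B)).card : ℂ) :=
      (Finset.add_sum_erase ℱ _ hBℱ).symm
    have hself : (B.filter (· ∈ B)).card = k := by
      rw [Finset.filter_true_of_mem (fun x hx => hx), hd1 B hB]
    have hrest : ∀ B' ∈ ℱ.erase B, ((B'.filter (· ∈ B)).card : ℂ) = (lam : ℂ) := by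
      intro B' hB'
      rw [mem_erase, hℱ, mem_filter] at hB'
      rw [SymAux.inter_card hlam hlk hkv hd1 hd2 hsym hB'.2.1 hB (fun hh => hB'.1 hh.symm)]
    rw [hsplit, hself, Finset.sum_congr rfl hrest, Finset.sum_const, nsmul_eq_mul,
      card_erase_of_mem hBℱ, hcardℱ]
    have hl1 : ((lam - 1 : ℕ) : ℂ) = (lam : ℂ) - 1 := by
      push_cast [Nat.cast_sub hlam]; ring
    rw [hl1]
    unfold charVec
    rw [if_pos hmem.1, if_pos hmem.2]
    ring
  · have hrest : ∀ B' ∈ ℱ, ((B'.filter (· ∈ B)).card : ℂ) = (lam : ℂ) := by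
      intro B' hB'
      rw [hℱ, mem_filter] at hB'
      have hne : B ≠ B' := fun hh => hmem (hh ▸ hB'.2)
      rw [SymAux.inter_card hlam hlk hkv hd1 hd2 hsym hB'.1 hB hne]
    rw [Finset.sum_congr rfl hrest, Finset.sum_const, nsmul_eq_mul, hcardℱ]
    have : charVec B i * charVec B j = 0 := by
      unfold charVec
      rcases not_and_or.mp hmem with h | h <;> simp [h]
    rw [this]
    ring

lemma bigIdeal_le_designIdeal : bigIdeal ℬ k lam ≤ designIdeal ℬ := by
  rw [bigIdeal, Ideal.span_le]
  rintro g (hg | ⟨i, j, hij, rfl⟩)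
  · rw [SetLike.mem_coe, mem_designIdeal_iff]
    exact fun B hB => eval_G0 (hd1 B hB) hg
  · rw [SetLike.mem_coe, mem_designIdeal_iff]
    exact fun B hB => eval_fij hlam hlk hkv hd1 hd2 hsym hij hB

end

section SpanLemma
variable (hlk : lam < k) (hk0 : k ≠ 0)

lemma mk_smul (J : Ideal (MvPolynomial (Fin v) ℂ)) (a : ℂ) (p : MvPolynomial (Fin v) ℂ) :
    Ideal.Quotient.mk J (a • p) = a • Ideal.Quotient.mk J p := by
  rw [← Ideal.Quotient.mkₐ_eq_mk ℂ, map_smul]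

lemma mk_C_mul (J : Ideal (MvPolynomial (Fin v) ℂ)) (a : ℂ) (p : MvPolynomial (Fin v) ℂ) :
    Ideal.Quotient.mk J (C a * p) = a • Ideal.Quotient.mk J p := by
  rw [← smul_eq_C_mul, mk_smul]

lemma mk_C (J : Ideal (MvPolynomial (Fin v) ℂ)) (a : ℂ) :
    Ideal.Quotient.mk J (C a) = a • (1 : MvPolynomial (Fin v) ℂ ⧸ J) := by
  rw [← mul_one (C a), mk_C_mul, map_one]

include hlk hk0

lemma span_X_top (p : MvPolynomial (Fin v) ℂ) :
    Ideal.Quotient.mk (bigIdeal ℬ k lam) p ∈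
      Submodule.span ℂ (Set.range fun i : Fin v =>
        Ideal.Quotient.mk (bigIdeal ℬ k lam) (X i)) := by
  have hkC : (k : ℂ) ≠ 0 := Nat.cast_ne_zero.mpr hk0
  have hklC : (k : ℂ) - (lam : ℂ) ≠ 0 := by
    rw [sub_ne_zero]
    exact fun hh => absurd (Nat.cast_injective hh) (by omega)
  set J := bigIdeal ℬ k lam with hJ
  set mk := Ideal.Quotient.mk J with hmk
  set V := Submodule.span ℂ (Set.range fun i : Fin v => mk (X i)) with hV
  have hXV : ∀ i : Fin v, mk (X i) ∈ V := fun i => Submodule.subset_span (Set.mem_range_self i)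
  have h1 : mk (C (k : ℂ)) = ∑ i : Fin v, mk (X i) := by
    have e : mk (∑ i : Fin v, X i) = mk (C (k : ℂ)) :=
      Ideal.Quotient.eq.mpr (Ideal.subset_span (Or.inl (Set.mem_insert _ _)))
    rw [← e, map_sum]
  have hone : (1 : MvPolynomial (Fin v) ℂ ⧸ J) ∈ V := by
    have e1 : (1 : MvPolynomial (Fin v) ℂ ⧸ J) = (k : ℂ)⁻¹ • mk (C (k : ℂ)) := by
      rw [mk_C, smul_smul, inv_mul_cancel₀ hkC, one_smul]
    rw [e1, h1]
    exact Submodule.smul_mem _ _ (Submodule.sum_mem _ (fun i _ => hXV i))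
  have hXX : ∀ i j : Fin v, mk (X i * X j) ∈ V := by
    intro i j
    by_cases hij : i = j
    · subst hij
      have e : mk (X i * X i) = mk (X i) := by
        apply Ideal.Quotient.eq.mpr
        have : X (R := ℂ) i * X i - X i = X i ^ 2 - X i := by ring
        rw [this]
        exact Ideal.subset_span (Or.inl (Set.mem_insert_iff.mpr (Or.inr ⟨i, rfl⟩)))
      rw [e]; exact hXV i
    · have hf : fij ℬ k lam i j ∈ J := Ideal.subset_span (Or.inr ⟨i, j, hij, rfl⟩)
      have hz : mk (fij ℬ k lam i j) = 0 := Ideal.Quotient.eq_zero_iff_mem.mpr hf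
      unfold fij at hz
      rw [map_add, map_sub, mk_C_mul, mk_C, map_sum] at hz
      have e2 : ((k : ℂ) - lam) • mk (X i * X j)
          = (∑ B ∈ ℬ.filter (fun B => i ∈ B ∧ j ∈ B), mk (∑ h ∈ B, X h))
            - ((lam : ℂ) ^ 2) • 1 := by
        rw [← sub_eq_zero, ← hz]; abel
      have hrhs : (∑ B ∈ ℬ.filter (fun B => i ∈ B ∧ j ∈ B), mk (∑ h ∈ B, X h))
          - ((lam : ℂ) ^ 2) • 1 ∈ V := by
        apply Submodule.sub_mem
        · exact Submodule.sum_mem _ (fun B _ => by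
            rw [map_sum]; exact Submodule.sum_mem _ (fun h _ => hXV h))
        · exact Submodule.smul_mem _ _ hone
      have e3 : mk (X i * X j) = ((k : ℂ) - lam)⁻¹ • (((k : ℂ) - lam) • mk (X i * X j)) := by
        rw [smul_smul, inv_mul_cancel₀ hklC, one_smul]
      rw [e3, e2]
      exact Submodule.smul_mem _ _ hrhs
  induction p using MvPolynomial.induction_on with
  | C a => rw [hmk, mk_C]; exact Submodule.smul_mem _ _ hone
  | add p q hp hq => rw [map_add]; exact Submodule.add_mem _ hp hq
  | mul_X p i hp =>
    rw [hV, Submodule.mem_span_range_iff_exists_fun ℂ] at hp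
    obtain ⟨c, hc⟩ := hp
    have e : mk (p * X i) = ∑ j : Fin v, c j • mk (X j * X i) := by
      rw [map_mul, ← hc, Finset.sum_mul]
      apply Finset.sum_congr rfl
      intro j _
      rw [map_mul, smul_mul_assoc]
    rw [e]
    exact Submodule.sum_mem _ (fun j _ => Submodule.smul_mem _ _ (hXX j i))

end SpanLemma

def trivialIdeal' (v k : ℕ) : Ideal (MvPolynomial (Fin v) ℂ) := Ideal.span (G0 (Fin v) k)

lemma monom_classify (m : Fin v →₀ ℕ) (h : (m.sum fun _ e => e) ≤ 1) :
    m = 0 ∨ ∃ i, m = Finsupp.single i 1 := by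
  rcases eq_or_ne m 0 with rfl | hm
  · exact Or.inl rfl
  right
  obtain ⟨i, hi⟩ := Finsupp.ne_iff.mp hm
  have hi' : m i ≠ 0 := by simpa using hi
  have hiS : i ∈ m.support := Finsupp.mem_support_iff.mpr hi'
  have hsum : (m.sum fun _ e => e) = ∑ j ∈ m.support, m j := rfl
  have h1 : m i ≤ ∑ j ∈ m.support, m j :=
    Finset.single_le_sum (fun _ _ => Nat.zero_le _) hiS
  have hsupp : m.support ⊆ {i} := by
    intro j hj
    rw [Finset.mem_singleton]
    by_contra hji
    have hj' : m j ≠ 0 := Finsupp.mem_support_iff.mp hj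
    have hpair : ({j, i} : Finset (Fin v)) ⊆ m.support := by
      intro x hx
      rcases Finset.mem_insert.mp hx with rfl | hx
      · exact hj
      · rw [Finset.mem_singleton] at hx
        subst hx
        exact hiS
    have h2 : m j + m i ≤ ∑ l ∈ m.support, m l := by
      rw [← Finset.sum_pair hji]
      exact Finset.sum_le_sum_of_subset hpair
    rw [hsum] at h
    omega
  have hmi : m = Finsupp.single i (m i) := Finsupp.support_subset_singleton.mp hsupp
  have : m i = 1 := by
    rw [hsum] at h
    omega
  exact ⟨i, by rw [hmi, this]⟩

lemma repr_le_one (p : MvPolynomial (Fin v) ℂ) (hp : p.totalDegree ≤ 1) :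
    p = C (coeff 0 p) + ∑ i : Fin v, C (coeff (Finsupp.single i 1) p) * X i := by
  apply MvPolynomial.ext
  intro m
  rw [coeff_add, coeff_C, coeff_sum]
  have hco : ∀ i : Fin v, coeff m (C (coeff (Finsupp.single i 1) p) * X i)
      = coeff (Finsupp.single i 1) p * (if Finsupp.single i 1 = m then 1 else 0) := by
    intro i
    rw [coeff_C_mul, coeff_X']
  rw [Finset.sum_congr rfl (fun i _ => hco i)]
  rcases eq_or_ne m 0 with rfl | hm0
  · have : ∀ i : Fin v, coeff (Finsupp.single i 1) p *
        (if Finsupp.single i 1 = 0 then (1:ℂ) else 0) = 0 := by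
      intro i
      rw [if_neg (by simp [Finsupp.single_eq_zero]), mul_zero]
    rw [Finset.sum_congr rfl (fun i _ => this i), Finset.sum_const, if_pos rfl]
    simp
  · rw [if_neg (fun hh => hm0 hh.symm), zero_add]
    by_cases hm1 : ∃ i, m = Finsupp.single i 1
    · obtain ⟨i0, rfl⟩ := hm1
      rw [Finset.sum_eq_single i0]
      · rw [if_pos rfl, mul_one]
      · intro j _ hj
        rw [if_neg, mul_zero]
        intro hh
        exact hj (by
          have := (Finsupp.single_eq_single_iff j i0 1 1).mp hh
          rcases this with ⟨h1, _⟩ | ⟨h1, _⟩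
          · exact h1
          · exact absurd h1 one_ne_zero)
      · intro h; exact absurd (Finset.mem_univ i0) h
    · have hdeg2 : 2 ≤ (m.sum fun _ e => e) := by
        by_contra hh
        rcases monom_classify m (by omega) with h0 | h1
        · exact hm0 h0
        · exact hm1 h1
      have hz : coeff m p = 0 := by
        apply coeff_eq_zero_of_totalDegree_lt
        have : (m.sum fun _ e => e) = ∑ i ∈ m.support, m i := rfl
        omega
      rw [hz]
      rw [Finset.sum_congr rfl (g := fun _ => (0:ℂ)) (fun i _ => by
        rw [if_neg (fun hh => hm1 ⟨i, hh.symm⟩), mul_zero])]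
      simp

section Main
variable (hlam : 1 ≤ lam) (hlk : lam < k) (hkv : k ≤ v - 2)
    (hd1 : ∀ B ∈ ℬ, B.card = k)
    (hd2 : ∀ T : Finset (Fin v), T.card = 2 → (ℬ.filter fun B => T ⊆ B).card = lam)
    (hsym : ℬ.card = v)
include hlam hlk hkv hd1 hd2 hsym

lemma designIdeal_eq : designIdeal ℬ = bigIdeal ℬ k lam := by
  apply le_antisymm _ (bigIdeal_le_designIdeal hlam hlk hkv hd1 hd2 hsym)
  intro f hf
  have hsp := span_X_top (ℬ := ℬ) hlk (by omega : k ≠ 0) f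
  rw [Submodule.mem_span_range_iff_exists_fun ℂ] at hsp
  obtain ⟨c, hc⟩ := hsp
  have hdiff : f - ∑ i : Fin v, c i • X i ∈ bigIdeal ℬ k lam := by
    apply Ideal.Quotient.eq.mp
    rw [map_sum]
    simp_rw [mk_smul]
    exact hc.symm
  have hgI : (∑ i : Fin v, c i • X i) ∈ designIdeal ℬ := by
    have h2 : f - (f - ∑ i : Fin v, c i • X i) = ∑ i : Fin v, c i • X i := by ring
    rw [← h2]
    exact Submodule.sub_mem _ hf (bigIdeal_le_designIdeal hlam hlk hkv hd1 hd2 hsym hdiff)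
  have heval : ∀ B ∈ ℬ, ∑ i ∈ B, c i = 0 := by
    intro B hB
    have h0 := mem_designIdeal_iff.mp hgI B hB
    rw [map_sum] at h0
    have e : ∀ i : Fin v, eval (charVec B) (c i • X i) = if i ∈ B then c i else 0 := by
      intro i
      rw [smul_eq_C_mul, map_mul, eval_C, eval_X]
      unfold charVec
      by_cases h : i ∈ B <;> simp [h]
    rw [Finset.sum_congr rfl (fun i _ => e i), Finset.sum_ite_mem, univ_inter] at h0
    exact h0
  have hc0 : ∀ i, c i = 0 := by
    intro i
    have := SymAux.linear_solve hlam hlk hkv hd1 hd2 hsym c 0 heval i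
    simpa using this
  have : (∑ i : Fin v, c i • X i) = (0 : MvPolynomial (Fin v) ℂ) := by
    rw [Finset.sum_congr rfl (g := fun _ => (0 : MvPolynomial (Fin v) ℂ))
      (fun i _ => by rw [hc0 i, zero_smul])]
    simp
  rw [this, sub_zero] at hdiff
  exact hdiff

lemma linear_mem_T {f : MvPolynomial (Fin v) ℂ} (hfI : f ∈ designIdeal ℬ)
    (hdeg : f.totalDegree ≤ 1) : f ∈ trivialIdeal' v k := by
  have hk0 : (k : ℂ) ≠ 0 := Nat.cast_ne_zero.mpr (by omega)
  set a : Fin v → ℂ := fun i => coeff (Finsupp.single i 1) f with ha_def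
  set c0 := coeff 0 f with hc0_def
  have hrepr := repr_le_one f hdeg
  have heval : ∀ B ∈ ℬ, ∑ i ∈ B, a i = -c0 := by
    intro B hB
    have h0 := mem_designIdeal_iff.mp hfI B hB
    rw [hrepr, map_add, eval_C, map_sum] at h0
    have e : ∀ i : Fin v, eval (charVec B) (C (a i) * X i) = if i ∈ B then a i else 0 := by
      intro i
      rw [map_mul, eval_C, eval_X]
      unfold charVec
      by_cases h : i ∈ B <;> simp [h]
    rw [Finset.sum_congr rfl (fun i _ => e i), Finset.sum_ite_mem, univ_inter] at h0
    linear_combination h0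
  have ha : ∀ i, a i = -c0 / k :=
    fun i => SymAux.linear_solve hlam hlk hkv hd1 hd2 hsym a (-c0) heval i
  have hfin : f = (-c0 / k) • ((∑ i : Fin v, X i) - C (k : ℂ)) := by
    rw [hrepr, smul_eq_C_mul, mul_sub, Finset.mul_sum, ← C_mul]
    have e1 : (-c0 / k) * k = -c0 := by field_simp
    rw [e1]
    rw [Finset.sum_congr rfl (g := fun i => C (-c0/k) * X i) (fun i _ => by rw [show coeff (Finsupp.single i 1) f = a i from rfl, ha i])]
    rw [map_neg]
    ring
  rw [hfin, smul_eq_C_mul]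
  exact Ideal.mul_mem_left _ _ (Ideal.subset_span (Set.mem_insert _ _))

end Main

section Deg2
variable (hlk : lam < k)
include hlk

lemma fij_coeff {i j : Fin v} (hij : i ≠ j) :
    coeff (Finsupp.single i 1 + Finsupp.single j 1) (fij ℬ k lam i j)
      = (k : ℂ) - (lam : ℂ) := by
  set m₀ : Fin v →₀ ℕ := Finsupp.single i 1 + Finsupp.single j 1 with hm₀
  have hdeg : (m₀.sum fun _ e => e) = 2 := by
    rw [hm₀, Finsupp.sum_add_index' (fun _ => rfl) (fun _ _ _ => rfl),
      Finsupp.sum_single_index rfl, Finsupp.sum_single_index rfl]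
  unfold fij
  rw [coeff_add, coeff_sub, coeff_C_mul, coeff_sum]
  have h1 : coeff m₀ (X i * X j : MvPolynomial (Fin v) ℂ) = 1 := by
    rw [hm₀, coeff_X_mul, coeff_X, if_pos rfl]
  have h2 : ∀ B ∈ ℬ.filter (fun B => i ∈ B ∧ j ∈ B),
      coeff m₀ (∑ h ∈ B, X h : MvPolynomial (Fin v) ℂ) = 0 := by
    intro B _
    rw [coeff_sum]
    apply Finset.sum_eq_zero
    intro h _
    rw [coeff_X']
    apply if_neg
    intro hh
    have := congrArg (fun m : Fin v →₀ ℕ => m.sum fun _ e => e) hh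
    rw [hdeg, Finsupp.sum_single_index rfl] at this
    omega
  have h3 : coeff m₀ (C ((lam : ℂ) ^ 2) : MvPolynomial (Fin v) ℂ) = 0 := by
    rw [coeff_C]
    apply if_neg
    intro hh
    have := congrArg (fun m : Fin v →₀ ℕ => m.sum fun _ e => e) hh.symm
    rw [hdeg, Finsupp.sum_zero_index] at this
    omega
  rw [h1, h3, Finset.sum_congr rfl h2, Finset.sum_const, smul_zero]
  ring

lemma fij_totalDegree {i j : Fin v} (hij : i ≠ j) :
    (fij ℬ k lam i j).totalDegree = 2 := by
  apply le_antisymm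
  · unfold fij
    apply le_trans (totalDegree_add _ _)
    apply max_le
    · apply le_trans (totalDegree_sub _ _)
      apply max_le
      · apply le_trans (totalDegree_mul _ _)
        rw [totalDegree_C, zero_add]
        apply le_trans (totalDegree_mul _ _)
        rw [totalDegree_X, totalDegree_X]
      · apply le_trans (totalDegree_finset_sum _ _)
        apply Finset.sup_le
        intro B _
        apply le_trans (totalDegree_finset_sum _ _)
        apply Finset.sup_le
        intro h _
        rw [totalDegree_X]
        omega
    · rw [totalDegree_C]
      omega
  · have hco := fij_coeff (ℬ := ℬ) hlk hij
    have hne : coeff (Finsupp.single i 1 + Finsupp.single j 1) (fij ℬ k lam i j) ≠ 0 := by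
      rw [hco, sub_ne_zero]
      exact fun hh => absurd (Nat.cast_injective hh) (by omega)
    have hmem := MvPolynomial.mem_support_iff.mpr hne
    have := MvPolynomial.le_totalDegree hmem
    rw [Finsupp.sum_add_index' (fun _ => rfl) (fun _ _ _ => rfl),
      Finsupp.sum_single_index rfl, Finsupp.sum_single_index rfl] at this
    exact this

end Deg2

section NotT
variable (hlam : 1 ≤ lam) (hlk : lam < k) (hkv : k ≤ v - 2)
    (hd1 : ∀ B ∈ ℬ, B.card = k)
    (hd2 : ∀ T : Finset (Fin v), T.card = 2 → (ℬ.filter fun B => T ⊆ B).card = lam)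
    (hsym : ℬ.card = v)
include hlam hlk hkv hd1 hd2 hsym

lemma exists_fij_notT :
    ∃ i j : Fin v, i ≠ j ∧ fij ℬ k lam i j ∉ trivialIdeal' v k := by
  by_contra hcon
  push_neg at hcon
  have hTsub : bigIdeal ℬ k lam ≤ trivialIdeal' v k := by
    rw [bigIdeal, Ideal.span_le]
    rintro g (hg | ⟨i, j, hij, rfl⟩)
    · exact Ideal.subset_span hg
    · exact hcon i j hij
  have hvanish : ∀ (S : Finset (Fin v)), S.card = k → ∀ f ∈ bigIdeal ℬ k lam,
      eval (charVec S) f = 0 := by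
    intro S hS f hf
    have hker : trivialIdeal' v k ≤ RingHom.ker (eval (charVec S)) := by
      rw [trivialIdeal', Ideal.span_le]
      intro g hg
      rw [SetLike.mem_coe, RingHom.mem_ker]
      exact eval_G0 hS hg
    exact hker (hTsub hf)
  classical
  let αk := {S : Finset (Fin v) // S.card = k}
  have hcardαk : Fintype.card αk = Nat.choose v k := by
    rw [Fintype.card_subtype]
    have e : (univ.filter fun S : Finset (Fin v) => S.card = k) = univ.powersetCard k := by
      ext S
      simp [Finset.mem_powersetCard_univ]
    rw [e, Finset.card_powersetCard, card_univ, Fintype.card_fin]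
  let ψ : MvPolynomial (Fin v) ℂ →ₗ[ℂ] (αk → ℂ) :=
    { toFun := fun f S => eval (charVec S.1) f
      map_add' := by intro f g; funext S; simp
      map_smul' := by
        intro c f; funext S
        simp [smul_eq_C_mul] }
  have hψ_apply : ∀ (f : MvPolynomial (Fin v) ℂ) (S : αk), ψ f S = eval (charVec S.1) f :=
    fun _ _ => rfl
  set W := Submodule.span ℂ (Set.range fun i : Fin v => ψ (X i)) with hW
  have hψX : ∀ p : MvPolynomial (Fin v) ℂ, ψ p ∈ W := by
    intro p
    have hsp := span_X_top (ℬ := ℬ) hlk (by omega : k ≠ 0) p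
    rw [Submodule.mem_span_range_iff_exists_fun ℂ] at hsp
    obtain ⟨c, hc⟩ := hsp
    have hdiff : p - ∑ i : Fin v, c i • X i ∈ bigIdeal ℬ k lam := by
      apply Ideal.Quotient.eq.mp
      rw [map_sum]
      simp_rw [mk_smul]
      exact hc.symm
    have h0 : ψ (p - ∑ i : Fin v, c i • X i) = 0 := by
      funext S
      rw [hψ_apply]
      exact hvanish S.1 S.2 _ hdiff
    have h1 : ψ p = ψ (∑ i : Fin v, c i • X i) := by
      have := sub_eq_zero.mp ((map_sub ψ _ _).symm.trans h0)
      exact this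
    rw [h1, map_sum]
    simp_rw [map_smul]
    exact Submodule.sum_mem _
      (fun i _ => Submodule.smul_mem _ _ (Submodule.subset_span (Set.mem_range_self i)))
  have hdelta : ∀ S : αk, (fun S' : αk => if S = S' then (1:ℂ) else 0) ∈ W := by
    intro S
    have e : (fun S' : αk => if S = S' then (1:ℂ) else 0) = ψ (∏ l ∈ S.1, X l) := by
      funext S'
      rw [hψ_apply, map_prod]
      by_cases h : S = S'
      · subst h
        rw [if_pos rfl]
        symm
        apply Finset.prod_eq_one
        intro l hl
        rw [eval_X]
        unfold charVec
        rw [if_pos hl]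
      · rw [if_neg h]
        have hsub : ¬ S.1 ⊆ S'.1 := by
          intro hss
          exact h (Subtype.ext (Finset.eq_of_subset_of_card_le hss (by rw [S'.2, S.2])))
        obtain ⟨l, hl, hl'⟩ := Finset.not_subset.mp hsub
        symm
        apply Finset.prod_eq_zero hl
        rw [eval_X]
        unfold charVec
        rw [if_neg hl']
    rw [e]
    exact hψX _
  have htop : W = ⊤ := by
    rw [eq_top_iff, ← (Pi.basisFun ℂ αk).span_eq]
    apply Submodule.span_le.mpr
    rintro _ ⟨S, rfl⟩
    have e : Pi.basisFun ℂ αk S = fun S' : αk => if S = S' then (1:ℂ) else 0 := by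
      funext S'
      rw [Pi.basisFun_apply, Pi.single_apply]
      simp [eq_comm]
    rw [e]
    exact hdelta S
  have hfr := finrank_le_of_span_eq_top htop
  rw [Module.finrank_fintype_fun_eq_card, hcardαk, Fintype.card_fin] at hfr
  have hch : v < Nat.choose v k := SymAux.choose_gt (by omega) hkv
  omega

end NotT

end SymPoly

/-- symmetric BIBDs: generators `f_{i,j}`, `γ₁ = γ₂ = 2`, and the cosets
of the `xᵢ` form a basis of the coordinate ring. -/
theorem symmetric_bibd_ideal (v k lam : ℕ) (hlam : 1 ≤ lam) (hlk : lam < k)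
    (hkv : k ≤ v - 2)
    (ℬ : Finset (Finset (Fin v))) (hdes : IsDesign ℬ k 2 lam) (hsym : ℬ.card = v) :
    designIdeal ℬ =
      Ideal.span (G0 (Fin v) k ∪
        {f | ∃ i j : Fin v, i ≠ j ∧ f =
          MvPolynomial.C ((k : ℂ) - (lam : ℂ)) *
              (MvPolynomial.X i * MvPolynomial.X j) -
            (∑ B ∈ ℬ.filter (fun B => i ∈ B ∧ j ∈ B), ∑ h ∈ B, MvPolynomial.X h) +
            MvPolynomial.C ((lam : ℂ) ^ 2)}) ∧
    (gamma1 k ℬ = 2 ∧ gamma2 ℬ = 2) ∧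
    (LinearIndependent ℂ
        (fun i : Fin v => Ideal.Quotient.mk (designIdeal ℬ) (MvPolynomial.X i)) ∧
      Submodule.span ℂ
          (Set.range fun i : Fin v =>
            Ideal.Quotient.mk (designIdeal ℬ) (MvPolynomial.X i)) = ⊤) := by

  obtain ⟨hd1, hd2⟩ := hdes
  have hk0 : k ≠ 0 := by omega
  have hseteq : {f | ∃ i j : Fin v, i ≠ j ∧ f =
          MvPolynomial.C ((k : ℂ) - (lam : ℂ)) *
              (MvPolynomial.X i * MvPolynomial.X j) -
            (∑ B ∈ ℬ.filter (fun B => i ∈ B ∧ j ∈ B), ∑ h ∈ B, MvPolynomial.X h) +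
            MvPolynomial.C ((lam : ℂ) ^ 2)} = SymPoly.fSet ℬ k lam := rfl
  have hIeq : designIdeal ℬ = SymPoly.bigIdeal ℬ k lam :=
    SymPoly.designIdeal_eq hlam hlk hkv hd1 hd2 hsym
  have hTeq : trivialIdeal (Fin v) k = SymPoly.trivialIdeal' v k := rfl
  obtain ⟨i0, j0, hij0, hnotT⟩ := SymPoly.exists_fij_notT hlam hlk hkv hd1 hd2 hsym
  have hfijI : SymPoly.fij ℬ k lam i0 j0 ∈ designIdeal ℬ := by
    rw [hIeq]
    exact Ideal.subset_span (Or.inr ⟨i0, j0, hij0, rfl⟩)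
  refine ⟨by rw [hseteq]; exact hIeq, ⟨?_, ?_⟩, ?_, ?_⟩
  · -- gamma1 = 2
    unfold gamma1
    set S1 := {d : ℕ | ∃ f ∈ designIdeal ℬ, f ∉ trivialIdeal (Fin v) k ∧ f.totalDegree = d}
      with hS1
    have h2mem : 2 ∈ S1 := by
      refine ⟨SymPoly.fij ℬ k lam i0 j0, hfijI, ?_, SymPoly.fij_totalDegree hlk hij0⟩
      rw [hTeq]
      exact hnotT
    obtain ⟨f, hfI, hfT, hfd⟩ := Nat.sInf_mem (⟨2, h2mem⟩ : S1.Nonempty)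
    have hle := Nat.sInf_le h2mem
    have hgt : ¬ sInf S1 ≤ 1 := by
      intro hh
      apply hfT
      rw [hTeq]
      exact SymPoly.linear_mem_T hlam hlk hkv hd1 hd2 hsym hfI (by omega)
    omega
  · -- gamma2 = 2
    unfold gamma2
    set S2 := {s : ℕ | ∃ G : Set (MvPolynomial (Fin v) ℂ),
      (∀ g ∈ G, g.totalDegree ≤ s) ∧ Ideal.span G = designIdeal ℬ} with hS2
    have h2mem : 2 ∈ S2 := by
      refine ⟨G0 (Fin v) k ∪ SymPoly.fSet ℬ k lam, ?_, ?_⟩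
      · rintro g (hg | ⟨i, j, hij, rfl⟩)
        · rcases hg with rfl | ⟨i, rfl⟩
          · apply le_trans (totalDegree_sub _ _)
            apply max_le
            · apply le_trans (totalDegree_finset_sum _ _)
              apply Finset.sup_le
              intro i _
              rw [totalDegree_X]
              omega
            · rw [totalDegree_C]; omega
          · apply le_trans (totalDegree_sub _ _)
            apply max_le
            · apply le_trans (totalDegree_pow _ _)
              rw [totalDegree_X]
            · rw [totalDegree_X]; omega
        · exact le_of_eq (SymPoly.fij_totalDegree hlk hij)
      · exact hIeq.symm
    obtain ⟨G, hdegG, hspanG⟩ := Nat.sInf_mem (⟨2, h2mem⟩ : S2.Nonempty)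
    have hle := Nat.sInf_le h2mem
    have hgt : ¬ sInf S2 ≤ 1 := by
      intro hh
      have hGT : ∀ g ∈ G, g ∈ trivialIdeal (Fin v) k := by
        intro g hg
        have hgI : g ∈ designIdeal ℬ := by
          rw [← hspanG]
          exact Ideal.subset_span hg
        rw [hTeq]
        exact SymPoly.linear_mem_T hlam hlk hkv hd1 hd2 hsym hgI
          (le_trans (hdegG g hg) (by omega))
      have hIT : designIdeal ℬ ≤ trivialIdeal (Fin v) k := by
        rw [← hspanG]
        exact Ideal.span_le.mpr hGT
      apply hnotT
      rw [← hTeq]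
      exact hIT hfijI
    omega
  · -- linear independence
    rw [Fintype.linearIndependent_iff]
    intro g hg i
    have hmk : Ideal.Quotient.mk (designIdeal ℬ) (∑ i : Fin v, g i • X i) = 0 := by
      rw [map_sum]
      simp_rw [SymPoly.mk_smul]
      exact hg
    have hmem : (∑ i : Fin v, g i • X i) ∈ designIdeal ℬ :=
      Ideal.Quotient.eq_zero_iff_mem.mp hmk
    have heval : ∀ B ∈ ℬ, ∑ i ∈ B, g i = 0 := by
      intro B hB
      have h0 := SymPoly.mem_designIdeal_iff.mp hmem B hB
      rw [map_sum] at h0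
      have e : ∀ i : Fin v, eval (charVec B) (g i • X i) = if i ∈ B then g i else 0 := by
        intro i
        rw [smul_eq_C_mul, map_mul, eval_C, eval_X]
        unfold charVec
        by_cases h : i ∈ B <;> simp [h]
      rw [Finset.sum_congr rfl (fun i _ => e i), Finset.sum_ite_mem, univ_inter] at h0
      exact h0
    have := SymAux.linear_solve hlam hlk hkv hd1 hd2 hsym g 0 heval i
    simpa using this
  · -- spanning
    rw [eq_top_iff]
    rintro x -
    obtain ⟨p, rfl⟩ := Ideal.Quotient.mk_surjective x
    rw [hIeq]
    exact SymPoly.span_X_top hlk hk0 p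
end
end

section
/- Let v ≥ 6 and let ℬ be a 2-(v,3,2) design on X = {1,…,v} such that { {1,2,3}, {1,4,5}, {2,4,6}, {3,5,6}, {1,2,4}, {1,3,5}, {2,3,6} } ⊆ ℬ, but {4,5,6} ∉ ℬ. Then γ2(ℬ) = 3. -/
noncomputable section

variable {σ : Type*}

open MvPolynomial

namespace G2Aux

variable {σ : Type*} [Fintype σ] [DecidableEq σ]

/-- cube indicator polynomial of a subset -/
def eP (p : Finset σ) : MvPolynomial σ ℂ := ∏ i, (if i ∈ p then X i else 1 - X i)

lemma X_mul_eP {J : Ideal (MvPolynomial σ ℂ)} (hsq : ∀ i : σ, X i ^ 2 - X i ∈ J)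
    (p : Finset σ) (i : σ) :
    X i * eP p - C (charVec p i) * eP p ∈ J := by
  have hrw : eP p = (if i ∈ p then X i else 1 - X i) *
      ∏ j ∈ Finset.univ.erase i, (if j ∈ p then X j else 1 - X j) :=
    (Finset.mul_prod_erase Finset.univ _ (Finset.mem_univ i)).symm
  by_cases h : i ∈ p
  · have heq : X i * eP p - C (charVec p i) * eP p
        = (X i ^ 2 - X i) * ∏ j ∈ Finset.univ.erase i, (if j ∈ p then X j else 1 - X j) := by
      rw [hrw, charVec]
      simp only [if_pos h, map_one]
      ring
    rw [heq]
    exact J.mul_mem_right _ (hsq i)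
  · have heq : X i * eP p - C (charVec p i) * eP p
        = (-(X i ^ 2 - X i)) * ∏ j ∈ Finset.univ.erase i, (if j ∈ p then X j else 1 - X j) := by
      rw [hrw, charVec]
      simp only [if_neg h, map_zero]
      ring
    rw [heq]
    exact J.mul_mem_right _ (J.neg_mem (hsq i))

lemma mul_eP {J : Ideal (MvPolynomial σ ℂ)} (hsq : ∀ i : σ, X i ^ 2 - X i ∈ J)
    (p : Finset σ) (g : MvPolynomial σ ℂ) :
    g * eP p - C (eval (charVec p) g) * eP p ∈ J := by
  induction g using MvPolynomial.induction_on with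
  | C a => simp
  | add f g hf hg =>
      have hmem := J.add_mem hf hg
      have heq : (f * eP p - C (eval (charVec p) f) * eP p) +
          (g * eP p - C (eval (charVec p) g) * eP p)
          = (f + g) * eP p - C (eval (charVec p) (f + g)) * eP p := by
        simp only [add_mul, map_add]
        ring
      rwa [heq] at hmem
  | mul_X f i hf =>
      have h2 := X_mul_eP hsq p i
      have hmem := J.add_mem (J.mul_mem_left (X i) hf)
        (J.mul_mem_left (C (eval (charVec p) f)) h2)
      have heq : X i * (f * eP p - C (eval (charVec p) f) * eP p) +
          C (eval (charVec p) f) * (X i * eP p - C (charVec p i) * eP p)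
          = (f * X i) * eP p - C (eval (charVec p) (f * X i)) * eP p := by
        simp only [eval_mul, eval_X, map_mul]
        ring
      rwa [heq] at hmem

lemma sum_eP : ∑ p ∈ (Finset.univ : Finset σ).powerset, eP p = 1 := by
  have h := Finset.prod_add (fun i : σ => X i)
    (fun i : σ => (1 - X i : MvPolynomial σ ℂ)) Finset.univ
  have h1 : ∏ i : σ, (X i + (1 - X i) : MvPolynomial σ ℂ) = 1 := by simp
  rw [h1] at h
  rw [h]
  refine Finset.sum_congr rfl fun p hp => ?_
  rw [eP, Finset.prod_ite, Finset.sdiff_eq_filter]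
  congr 1
  exact Finset.prod_congr (by simp) fun _ _ => rfl


lemma mem_designIdeal_iff (ℬ : Finset (Finset σ)) (f : MvPolynomial σ ℂ) :
    f ∈ designIdeal ℬ ↔ ∀ B ∈ ℬ, eval (charVec B) f = 0 := by
  simp [designIdeal, Ideal.mem_iInf, RingHom.mem_ker]

lemma eval_charVec_sumX (p : Finset σ) :
    eval (charVec p) (∑ i, X i) = (p.card : ℂ) := by
  simp [charVec, Finset.sum_ite_mem]

lemma eval_charVec_prodX (p B : Finset σ) :
    eval (charVec p) (∏ i ∈ B, X i) = if B ⊆ p then 1 else 0 := by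
  rw [map_prod]
  by_cases h : B ⊆ p
  · rw [if_pos h]
    exact Finset.prod_eq_one fun i hi => by simp [charVec, h hi]
  · rw [if_neg h]
    obtain ⟨i, hiB, hip⟩ := Finset.not_subset.mp h
    exact Finset.prod_eq_zero hiB (by simp [charVec, hip])

/-- the degree-≤3 generating set -/
def GSet (ℬ : Finset (Finset σ)) : Set (MvPolynomial σ ℂ) :=
  G0 σ 3 ∪ {m | ∃ C : Finset σ, C.card = 3 ∧ C ∉ ℬ ∧ m = ∏ i ∈ C, X i}

lemma sq_mem_GSet (ℬ : Finset (Finset σ)) (i : σ) :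
    X i ^ 2 - X i ∈ Ideal.span (GSet ℬ) :=
  Ideal.subset_span (Or.inl (Set.mem_insert_iff.mpr (Or.inr ⟨i, rfl⟩)))

lemma eP_mem_span (ℬ : Finset (Finset σ)) (p : Finset σ) (hp : p ∉ ℬ) :
    eP p ∈ Ideal.span (GSet ℬ) := by
  set J := Ideal.span (GSet ℬ) with hJ
  have hsq : ∀ i : σ, X i ^ 2 - X i ∈ J := sq_mem_GSet ℬ
  by_cases hc : p.card = 3
  · have hm : (∏ i ∈ p, X i) ∈ J := Ideal.subset_span (Or.inr ⟨p, hc, hp, rfl⟩)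
    have h1 := mul_eP hsq p (∏ i ∈ p, X i)
    rw [eval_charVec_prodX, if_pos (Finset.Subset.refl p), map_one, one_mul] at h1
    have := J.sub_mem (J.mul_mem_right (eP p) hm) h1
    simpa using this
  · have hs : ((∑ i, X i) - C (3:ℂ)) ∈ J := by
      refine Ideal.subset_span (Or.inl (Set.mem_insert_iff.mpr (Or.inl ?_)))
      norm_num [G0]
    have h1 := mul_eP hsq p ((∑ i, X i) - C (3:ℂ))
    have hev : eval (charVec p) ((∑ i, X i) - C (3:ℂ)) = (p.card : ℂ) - 3 := by
      rw [map_sub, eval_charVec_sumX, eval_C]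
    rw [hev] at h1
    have h2 : C ((p.card : ℂ) - 3) * eP p ∈ J := by
      have := J.sub_mem (J.mul_mem_right (eP p) hs) h1
      simpa using this
    have hne : ((p.card : ℂ) - 3) ≠ 0 := by
      intro h
      exact hc (by exact_mod_cast sub_eq_zero.mp h)
    have := J.mul_mem_left (C ((p.card : ℂ) - 3)⁻¹) h2
    rwa [← mul_assoc, ← map_mul, inv_mul_cancel₀ hne, map_one, one_mul] at this

lemma span_GSet (ℬ : Finset (Finset σ)) (hcard : ∀ B ∈ ℬ, B.card = 3) :
    Ideal.span (GSet ℬ) = designIdeal ℬ := by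
  set J := Ideal.span (GSet ℬ) with hJ
  have hsq : ∀ i : σ, X i ^ 2 - X i ∈ J := sq_mem_GSet ℬ
  apply le_antisymm
  · rw [Ideal.span_le]
    rintro g (hg | ⟨Cs, hC3, hCB, rfl⟩)
    · rw [SetLike.mem_coe, mem_designIdeal_iff]
      intro B hB
      rcases Set.mem_insert_iff.mp hg with h | ⟨i, rfl⟩
      · subst h
        rw [map_sub, eval_charVec_sumX, eval_C, hcard B hB]
        norm_num
      · simp only [map_sub, map_pow, eval_X, charVec]
        by_cases h : i ∈ B <;> simp [h]
    · rw [SetLike.mem_coe, mem_designIdeal_iff]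
      intro B hB
      rw [eval_charVec_prodX, if_neg]
      intro hsub
      exact hCB (by rwa [Finset.eq_of_subset_of_card_le hsub (by rw [hC3, hcard B hB])])
  · intro f hf
    rw [mem_designIdeal_iff] at hf
    have hdec : f - ∑ p ∈ (Finset.univ : Finset σ).powerset,
        C (eval (charVec p) f) * eP p ∈ J := by
      have h1 : f = ∑ p ∈ (Finset.univ : Finset σ).powerset, f * eP p := by
        rw [← Finset.mul_sum, sum_eP, mul_one]
      have heq : f - ∑ p ∈ (Finset.univ : Finset σ).powerset, C (eval (charVec p) f) * eP p
          = ∑ p ∈ (Finset.univ : Finset σ).powerset,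
            (f * eP p - C (eval (charVec p) f) * eP p) := by
        rw [Finset.sum_sub_distrib, ← h1]
      rw [heq]
      exact Ideal.sum_mem J fun p _ => mul_eP hsq p f
    have hsum : ∑ p ∈ (Finset.univ : Finset σ).powerset,
        C (eval (charVec p) f) * eP p ∈ J := by
      refine Ideal.sum_mem J fun p _ => ?_
      by_cases hp : p ∈ ℬ
      · rw [hf p hp, map_zero, zero_mul]
        exact J.zero_mem
      · exact J.mul_mem_left _ (eP_mem_span ℬ p hp)
    simpa using J.add_mem hdec hsum

lemma GSet_deg (ℬ : Finset (Finset σ)) : ∀ g ∈ GSet ℬ, g.totalDegree ≤ 3 := by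
  rintro g (hg | ⟨Cs, hC3, hCB, rfl⟩)
  · rcases Set.mem_insert_iff.mp hg with h | ⟨i, rfl⟩
    · subst h
      refine le_trans (totalDegree_sub_C_le _ _) ?_
      refine le_trans (totalDegree_finset_sum _ _) ?_
      refine le_trans (Finset.sup_le fun i _ => le_of_eq (totalDegree_X i)) ?_
      norm_num
    · refine le_trans (totalDegree_sub _ _) (max_le ?_ ?_)
      · rw [pow_two]
        refine le_trans (totalDegree_mul _ _) ?_
        simp [totalDegree_X]
      · simp [totalDegree_X]
  · refine le_trans (totalDegree_finset_prod _ _) ?_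
    calc ∑ i ∈ Cs, (X i : MvPolynomial σ ℂ).totalDegree = ∑ i ∈ Cs, 1 := by
          simp [totalDegree_X]
      _ ≤ 3 := by simp [hC3]


def ind3 (n₀ n₁ n₂ m : ℕ) : ℂ := if m = n₀ ∨ m = n₁ ∨ m = n₂ then 1 else 0

lemma ind3_big {m : ℕ} (hm : 6 ≤ m) {n₀ n₁ n₂ : ℕ} (h0 : n₀ < 6) (h1 : n₁ < 6)
    (h2 : n₂ < 6) : ind3 n₀ n₁ n₂ m = 0 := if_neg (by omega)

lemma scalar1 (m : ℕ) : ind3 3 4 5 m =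
    ind3 0 1 2 m + ind3 0 3 4 m + ind3 1 3 5 m + ind3 2 4 5 m
    - ind3 0 1 3 m - ind3 0 2 4 m - ind3 1 2 5 m := by
  by_cases h : m < 6
  · interval_cases m <;> norm_num [ind3]
  · rw [ind3_big (by omega) (by omega) (by omega) (by omega),
        ind3_big (by omega) (by omega) (by omega) (by omega),
        ind3_big (by omega) (by omega) (by omega) (by omega),
        ind3_big (by omega) (by omega) (by omega) (by omega),
        ind3_big (by omega) (by omega) (by omega) (by omega),
        ind3_big (by omega) (by omega) (by omega) (by omega),
        ind3_big (by omega) (by omega) (by omega) (by omega),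
        ind3_big (by omega) (by omega) (by omega) (by omega)]
    norm_num

lemma scalar2 (m n : ℕ) : ind3 3 4 5 m * ind3 3 4 5 n =
    ind3 0 1 2 m * ind3 0 1 2 n + ind3 0 3 4 m * ind3 0 3 4 n
    + ind3 1 3 5 m * ind3 1 3 5 n + ind3 2 4 5 m * ind3 2 4 5 n
    - ind3 0 1 3 m * ind3 0 1 3 n - ind3 0 2 4 m * ind3 0 2 4 n
    - ind3 1 2 5 m * ind3 1 2 5 n := by
  by_cases hm : m < 6
  · by_cases hn : n < 6
    · interval_cases m <;> interval_cases n <;> norm_num [ind3]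
    · have z : ∀ n₀ n₁ n₂ : ℕ, n₀ < 6 → n₁ < 6 → n₂ < 6 → ind3 n₀ n₁ n₂ n = 0 :=
        fun _ _ _ a b c => ind3_big (by omega) a b c
      rw [z 3 4 5 (by omega) (by omega) (by omega), z 0 1 2 (by omega) (by omega) (by omega),
          z 0 3 4 (by omega) (by omega) (by omega), z 1 3 5 (by omega) (by omega) (by omega),
          z 2 4 5 (by omega) (by omega) (by omega), z 0 1 3 (by omega) (by omega) (by omega),
          z 0 2 4 (by omega) (by omega) (by omega), z 1 2 5 (by omega) (by omega) (by omega)]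
      ring
  · have z : ∀ n₀ n₁ n₂ : ℕ, n₀ < 6 → n₁ < 6 → n₂ < 6 → ind3 n₀ n₁ n₂ m = 0 :=
      fun _ _ _ a b c => ind3_big (by omega) a b c
    rw [z 3 4 5 (by omega) (by omega) (by omega), z 0 1 2 (by omega) (by omega) (by omega),
        z 0 3 4 (by omega) (by omega) (by omega), z 1 3 5 (by omega) (by omega) (by omega),
        z 2 4 5 (by omega) (by omega) (by omega), z 0 1 3 (by omega) (by omega) (by omega),
        z 0 2 4 (by omega) (by omega) (by omega), z 1 2 5 (by omega) (by omega) (by omega)]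
    ring


lemma charVec_triple {v : ℕ} {n₀ n₁ n₂ : ℕ} (h₀ : n₀ < v) (h₁ : n₁ < v) (h₂ : n₂ < v)
    (a : Fin v) :
    charVec ({⟨n₀,h₀⟩, ⟨n₁,h₁⟩, ⟨n₂,h₂⟩} : Finset (Fin v)) a = ind3 n₀ n₁ n₂ a.val := by
  simp only [charVec, ind3, Finset.mem_insert, Finset.mem_singleton, Fin.ext_iff]

omit [Fintype σ] in
lemma eval_eq_sum_prod (B : Finset σ) (f : MvPolynomial σ ℂ) :
    eval (charVec B) f = ∑ m ∈ f.support, coeff m f * ∏ i ∈ m.support, charVec B i := by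
  conv_lhs => rw [f.as_sum]
  rw [map_sum]
  refine Finset.sum_congr rfl fun m hm => ?_
  rw [eval_monomial]
  congr 1
  rw [Finsupp.prod]
  refine Finset.prod_congr rfl fun i hi => ?_
  have hne : m i ≠ 0 := Finsupp.mem_support_iff.mp hi
  by_cases h : i ∈ B <;> simp [charVec, h, zero_pow hne]

lemma comb {v : ℕ} (h0 : 0 < v) (h1 : 1 < v) (h2 : 2 < v) (h3 : 3 < v) (h4 : 4 < v)
    (h5 : 5 < v) (S : Finset (Fin v)) (hS : S.card ≤ 2) :
    ∏ i ∈ S, charVec ({⟨3,h3⟩,⟨4,h4⟩,⟨5,h5⟩} : Finset (Fin v)) i =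
      ∏ i ∈ S, charVec ({⟨0,h0⟩,⟨1,h1⟩,⟨2,h2⟩} : Finset (Fin v)) i
    + ∏ i ∈ S, charVec ({⟨0,h0⟩,⟨3,h3⟩,⟨4,h4⟩} : Finset (Fin v)) i
    + ∏ i ∈ S, charVec ({⟨1,h1⟩,⟨3,h3⟩,⟨5,h5⟩} : Finset (Fin v)) i
    + ∏ i ∈ S, charVec ({⟨2,h2⟩,⟨4,h4⟩,⟨5,h5⟩} : Finset (Fin v)) i
    - ∏ i ∈ S, charVec ({⟨0,h0⟩,⟨1,h1⟩,⟨3,h3⟩} : Finset (Fin v)) i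
    - ∏ i ∈ S, charVec ({⟨0,h0⟩,⟨2,h2⟩,⟨4,h4⟩} : Finset (Fin v)) i
    - ∏ i ∈ S, charVec ({⟨1,h1⟩,⟨2,h2⟩,⟨5,h5⟩} : Finset (Fin v)) i := by
  have hc : S.card = 0 ∨ S.card = 1 ∨ S.card = 2 := by omega
  rcases hc with h | h | h
  · rw [Finset.card_eq_zero] at h
    subst h
    norm_num
  · obtain ⟨a, rfl⟩ := Finset.card_eq_one.mp h
    simp only [Finset.prod_singleton, charVec_triple]
    exact scalar1 a.val
  · obtain ⟨a, b, hab, rfl⟩ := Finset.card_eq_two.mp h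
    simp only [Finset.prod_pair hab, charVec_triple]
    exact scalar2 a.val b.val

lemma key_identity {v : ℕ} (h0 : 0 < v) (h1 : 1 < v) (h2 : 2 < v) (h3 : 3 < v)
    (h4 : 4 < v) (h5 : 5 < v) (f : MvPolynomial (Fin v) ℂ) (hdeg : f.totalDegree ≤ 2) :
    eval (charVec ({⟨3,h3⟩,⟨4,h4⟩,⟨5,h5⟩} : Finset (Fin v))) f =
      eval (charVec ({⟨0,h0⟩,⟨1,h1⟩,⟨2,h2⟩} : Finset (Fin v))) f
    + eval (charVec ({⟨0,h0⟩,⟨3,h3⟩,⟨4,h4⟩} : Finset (Fin v))) f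
    + eval (charVec ({⟨1,h1⟩,⟨3,h3⟩,⟨5,h5⟩} : Finset (Fin v))) f
    + eval (charVec ({⟨2,h2⟩,⟨4,h4⟩,⟨5,h5⟩} : Finset (Fin v))) f
    - eval (charVec ({⟨0,h0⟩,⟨1,h1⟩,⟨3,h3⟩} : Finset (Fin v))) f
    - eval (charVec ({⟨0,h0⟩,⟨2,h2⟩,⟨4,h4⟩} : Finset (Fin v))) f
    - eval (charVec ({⟨1,h1⟩,⟨2,h2⟩,⟨5,h5⟩} : Finset (Fin v))) f := by
  simp only [eval_eq_sum_prod]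
  rw [← Finset.sum_add_distrib, ← Finset.sum_add_distrib, ← Finset.sum_add_distrib,
      ← Finset.sum_sub_distrib, ← Finset.sum_sub_distrib, ← Finset.sum_sub_distrib]
  refine Finset.sum_congr rfl fun m hm => ?_
  have hcard : m.support.card ≤ 2 := by
    have hd : (m.sum fun _ e => e) ≤ f.totalDegree := le_totalDegree hm
    have hcs : m.support.card ≤ m.sum fun _ e => e := by
      rw [Finsupp.sum]
      calc m.support.card = ∑ _i ∈ m.support, 1 := by simp
        _ ≤ ∑ i ∈ m.support, m i :=
            Finset.sum_le_sum fun i hi => Nat.one_le_iff_ne_zero.mpr (Finsupp.mem_support_iff.mp hi)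
    omega
  have hc := comb h0 h1 h2 h3 h4 h5 m.support hcard
  rw [hc]
  ring

end G2Aux

/-- a `2`-`(v,3,2)` design containing the seven listed triples but not
`{4,5,6}` has `γ₂(ℬ) = 3`.  (Points `1,…,6` are represented by `0,…,5 : Fin v`.) -/
theorem triple_system_gamma2_eq_three (v : ℕ) (hv : 6 ≤ v)
    (ℬ : Finset (Finset (Fin v))) (hdes : IsDesign ℬ 3 2 2)
    (h1 : ({⟨0, by omega⟩, ⟨1, by omega⟩, ⟨2, by omega⟩} : Finset (Fin v)) ∈ ℬ)
    (h2 : ({⟨0, by omega⟩, ⟨3, by omega⟩, ⟨4, by omega⟩} : Finset (Fin v)) ∈ ℬ)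
    (h3 : ({⟨1, by omega⟩, ⟨3, by omega⟩, ⟨5, by omega⟩} : Finset (Fin v)) ∈ ℬ)
    (h4 : ({⟨2, by omega⟩, ⟨4, by omega⟩, ⟨5, by omega⟩} : Finset (Fin v)) ∈ ℬ)
    (h5 : ({⟨0, by omega⟩, ⟨1, by omega⟩, ⟨3, by omega⟩} : Finset (Fin v)) ∈ ℬ)
    (h6 : ({⟨0, by omega⟩, ⟨2, by omega⟩, ⟨4, by omega⟩} : Finset (Fin v)) ∈ ℬ)
    (h7 : ({⟨1, by omega⟩, ⟨2, by omega⟩, ⟨5, by omega⟩} : Finset (Fin v)) ∈ ℬ)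
    (h8 : ({⟨3, by omega⟩, ⟨4, by omega⟩, ⟨5, by omega⟩} : Finset (Fin v)) ∉ ℬ) :
    gamma2 ℬ = 3 := by
  classical
  obtain ⟨hcard, -⟩ := hdes
  have h3mem : (3:ℕ) ∈ {s : ℕ | ∃ G : Set (MvPolynomial (Fin v) ℂ),
      (∀ g ∈ G, g.totalDegree ≤ s) ∧ Ideal.span G = designIdeal ℬ} :=
    ⟨G2Aux.GSet ℬ, G2Aux.GSet_deg ℬ, G2Aux.span_GSet ℬ hcard⟩
  rw [gamma2]
  refine le_antisymm (Nat.sInf_le h3mem) (le_csInf ⟨3, h3mem⟩ ?_)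
  rintro s ⟨G, hdeg, hspan⟩
  by_contra hlt
  push_neg at hlt
  have hs2 : s ≤ 2 := by omega
  set T : Finset (Fin v) :=
    ({⟨3, by omega⟩, ⟨4, by omega⟩, ⟨5, by omega⟩} : Finset (Fin v)) with hTdef
  have hT : designIdeal ℬ ≤ RingHom.ker (MvPolynomial.eval (charVec T)) := by
    rw [← hspan, Ideal.span_le]
    intro g hg
    have hgI : g ∈ designIdeal ℬ := hspan ▸ Ideal.subset_span hg
    rw [G2Aux.mem_designIdeal_iff] at hgI
    rw [SetLike.mem_coe, RingHom.mem_ker, hTdef,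
      G2Aux.key_identity (by omega) (by omega) (by omega) (by omega) (by omega) (by omega)
        g (le_trans (hdeg g hg) hs2),
      hgI _ h1, hgI _ h2, hgI _ h3, hgI _ h4, hgI _ h5, hgI _ h6, hgI _ h7]
    ring
  have hT3 : T.card = 3 := by
    rw [hTdef, Finset.card_insert_of_notMem (by simp [Fin.ext_iff]),
      Finset.card_insert_of_notMem (by simp [Fin.ext_iff]), Finset.card_singleton]
  have hmT : (∏ i ∈ T, MvPolynomial.X i) ∈ designIdeal ℬ := by
    rw [G2Aux.mem_designIdeal_iff]
    intro B hB
    rw [G2Aux.eval_charVec_prodX, if_neg]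
    intro hsub
    exact h8 (by rwa [Finset.eq_of_subset_of_card_le hsub (by rw [hT3, hcard B hB])])
  have hker := hT hmT
  rw [RingHom.mem_ker, G2Aux.eval_charVec_prodX, if_pos (Finset.Subset.refl T)] at hker
  exact one_ne_zero hker
end
end

section
/- Let {T_1, T_2} be a trade of triples on the point set X = {1,…,v} and let B ∈ T_2. Suppose ℬ is a 2-(v,3,2) design on X such that T_1 ∪ (T_2 ∖ {B}) ⊆ ℬ and B ∉ ℬ. Then γ2(ℬ) = 3. -/
noncomputable section

variable {σ : Type*}

/-- `{T1, T2}` is a trade of triples: disjoint partial Steiner triple systems covering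
exactly the same pairs. -/
def IsTrade [DecidableEq σ] (T1 T2 : Finset (Finset σ)) : Prop :=
  (∀ B ∈ T1, B.card = 3) ∧ (∀ B ∈ T2, B.card = 3) ∧
  Disjoint T1 T2 ∧
  (∀ P : Finset σ, P.card = 2 → (T1.filter fun B => P ⊆ B).card ≤ 1) ∧
  (∀ P : Finset σ, P.card = 2 → (T2.filter fun B => P ⊆ B).card ≤ 1) ∧
  (∀ P : Finset σ, P.card = 2 → ((∃ B ∈ T1, P ⊆ B) ↔ (∃ B ∈ T2, P ⊆ B)))

/-- The 2-incidence vector `δ²(C)`, indexed by subsets `J` with `|J| ≤ 2`. -/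
def delta2 [DecidableEq σ] (C : Finset σ) : {J : Finset σ // J.card ≤ 2} → ℤ :=
  fun J => if J.1 ⊆ C then 1 else 0


namespace TradeAux

open MvPolynomial Finset

variable {v : ℕ}

/-! ### Evaluation basics -/

lemma eval_prodX (C T : Finset (Fin v)) :
    MvPolynomial.eval (charVec C) (∏ i ∈ T, X i) = if T ⊆ C then 1 else 0 := by
  rw [map_prod]
  by_cases h : T ⊆ C
  · rw [if_pos h]
    refine Finset.prod_eq_one fun i hi => ?_
    simp [charVec, h hi]
  · rw [if_neg h]
    obtain ⟨i, hi, hic⟩ := Finset.not_subset.mp h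
    exact Finset.prod_eq_zero hi (by simp [charVec, hic])

lemma eval_monomial_charVec (C : Finset (Fin v)) (e : Fin v →₀ ℕ) (a : ℂ) :
    MvPolynomial.eval (charVec C) (monomial e a) = if e.support ⊆ C then a else 0 := by
  rw [eval_monomial]
  have key : (e.prod fun n k => charVec C n ^ k) = if e.support ⊆ C then 1 else 0 := by
    rw [Finsupp.prod]
    by_cases h : e.support ⊆ C
    · rw [if_pos h]
      refine Finset.prod_eq_one fun i hi => ?_
      simp [charVec, h hi]
    · rw [if_neg h]
      obtain ⟨i, hi, hic⟩ := Finset.not_subset.mp h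
      refine Finset.prod_eq_zero hi ?_
      have hc : charVec C i = 0 := if_neg hic
      rw [hc, zero_pow (Finsupp.mem_support_iff.mp hi)]
  rw [key]
  split <;> ring

lemma mem_designIdeal_iff {ℬ : Finset (Finset (Fin v))} {f : MvPolynomial (Fin v) ℂ} :
    f ∈ designIdeal ℬ ↔ ∀ C ∈ ℬ, MvPolynomial.eval (charVec C) f = 0 := by
  simp [designIdeal, Ideal.mem_iInf, RingHom.mem_ker]

/-! ### Counting lemmas for trades -/

lemma count_pair_point (T : Finset (Finset (Fin v))) (hT : ∀ C ∈ T, C.card = 3) (a : Fin v) :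
    ∑ b ∈ Finset.univ.erase a, (T.filter fun C => ({a, b} : Finset (Fin v)) ⊆ C).card
      = 2 * (T.filter fun C => a ∈ C).card := by
  simp only [Finset.card_filter]
  rw [Finset.sum_comm, Finset.mul_sum]
  refine Finset.sum_congr rfl fun C hC => ?_
  by_cases ha : a ∈ C
  · have hiff : ∀ b : Fin v, (({a, b} : Finset (Fin v)) ⊆ C) ↔ b ∈ C := fun b => by
      simp [Finset.insert_subset_iff, ha]
    calc ∑ b ∈ Finset.univ.erase a, (if ({a, b} : Finset (Fin v)) ⊆ C then 1 else 0)
        = ∑ b ∈ Finset.univ.erase a, (if b ∈ C then 1 else 0) := by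
          refine Finset.sum_congr rfl fun b _ => ?_
          simp only [hiff]
      _ = ((Finset.univ.erase a).filter (· ∈ C)).card := (Finset.card_filter _ _).symm
      _ = (C.erase a).card := by
          congr 1
          ext x
          simp [Finset.mem_erase, and_comm]
      _ = 2 := by rw [Finset.card_erase_of_mem ha, hT C hC]
      _ = 2 * (if a ∈ C then 1 else 0) := by rw [if_pos ha, mul_one]
  · have : ∀ b : Fin v, ¬ (({a, b} : Finset (Fin v)) ⊆ C) := fun b hb => by
      exact ha (hb (by simp))
    rw [Finset.sum_eq_zero fun b _ => if_neg (this b), if_neg ha, mul_zero]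

lemma count_point_total (T : Finset (Finset (Fin v))) (hT : ∀ C ∈ T, C.card = 3) :
    ∑ a : Fin v, (T.filter fun C => a ∈ C).card = 3 * T.card := by
  simp only [Finset.card_filter]
  rw [Finset.sum_comm]
  calc ∑ C ∈ T, ∑ a : Fin v, (if a ∈ C then 1 else 0)
      = ∑ C ∈ T, 3 := by
        refine Finset.sum_congr rfl fun C hC => ?_
        have : ∑ a : Fin v, (if a ∈ C then 1 else 0)
            = (Finset.univ.filter (· ∈ C)).card := (Finset.card_filter _ _).symm
        rw [this]
        have huniv : (Finset.univ.filter (· ∈ C)) = C := by ext x; simp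
        rw [huniv, hT C hC]
    _ = 3 * T.card := by rw [Finset.sum_const, smul_eq_mul, mul_comm]

lemma trade_count {T1 T2 : Finset (Finset (Fin v))} (h : IsTrade T1 T2) :
    ∀ S : Finset (Fin v), S.card ≤ 2 →
      (T1.filter fun C => S ⊆ C).card = (T2.filter fun C => S ⊆ C).card := by
  obtain ⟨h1, h2, _hdisj, hm1, hm2, hiff⟩ := h
  have pair : ∀ S : Finset (Fin v), S.card = 2 →
      (T1.filter fun C => S ⊆ C).card = (T2.filter fun C => S ⊆ C).card := by
    intro S hS
    have e1 := hm1 S hS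
    have e2 := hm2 S hS
    have hpos : (0 < (T1.filter fun C => S ⊆ C).card) ↔ (0 < (T2.filter fun C => S ⊆ C).card) := by
      rw [Finset.card_pos, Finset.card_pos, Finset.filter_nonempty_iff,
        Finset.filter_nonempty_iff]
      exact hiff S hS
    omega
  have point : ∀ a : Fin v,
      (T1.filter fun C => a ∈ C).card = (T2.filter fun C => a ∈ C).card := by
    intro a
    have k1 := count_pair_point T1 h1 a
    have k2 := count_pair_point T2 h2 a
    have heq : ∑ b ∈ Finset.univ.erase a, (T1.filter fun C => ({a, b} : Finset (Fin v)) ⊆ C).card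
        = ∑ b ∈ Finset.univ.erase a, (T2.filter fun C => ({a, b} : Finset (Fin v)) ⊆ C).card := by
      refine Finset.sum_congr rfl fun b hb => ?_
      have hba : b ≠ a := (Finset.mem_erase.mp hb).1
      exact pair {a, b} (Finset.card_pair hba.symm)
    omega
  intro S hS
  match hc : S.card, hS with
  | 0, _ =>
    have hSe : S = ∅ := Finset.card_eq_zero.mp hc
    subst hSe
    have f1 : (T1.filter fun C => (∅ : Finset (Fin v)) ⊆ C) = T1 :=
      Finset.filter_true_of_mem fun C _ => Finset.empty_subset C
    have f2 : (T2.filter fun C => (∅ : Finset (Fin v)) ⊆ C) = T2 :=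
      Finset.filter_true_of_mem fun C _ => Finset.empty_subset C
    rw [f1, f2]
    have t1 := count_point_total T1 h1
    have t2 := count_point_total T2 h2
    have : ∑ a : Fin v, (T1.filter fun C => a ∈ C).card
        = ∑ a : Fin v, (T2.filter fun C => a ∈ C).card :=
      Finset.sum_congr rfl fun a _ => point a
    omega
  | 1, _ =>
    obtain ⟨a, rfl⟩ := Finset.card_eq_one.mp hc
    simp only [Finset.singleton_subset_iff]
    exact point a
  | 2, _ => exact pair S hc

/-! ### The trade forces vanishing at the missing block -/

lemma eval_sum_trade {T1 T2 : Finset (Finset (Fin v))} (h : IsTrade T1 T2)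
    {g : MvPolynomial (Fin v) ℂ} (hg : g.totalDegree ≤ 2) :
    ∑ C ∈ T1, MvPolynomial.eval (charVec C) g = ∑ C ∈ T2, MvPolynomial.eval (charVec C) g := by
  have key : ∀ Tl : Finset (Finset (Fin v)),
      ∑ C ∈ Tl, MvPolynomial.eval (charVec C) g
        = ∑ e ∈ g.support, (g.coeff e) * ((Tl.filter fun C => e.support ⊆ C).card : ℂ) := by
    intro Tl
    have hev : ∀ C : Finset (Fin v), MvPolynomial.eval (charVec C) g
        = ∑ e ∈ g.support, if e.support ⊆ C then g.coeff e else 0 := by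
      intro C
      conv_lhs => rw [g.as_sum]
      rw [map_sum]
      exact Finset.sum_congr rfl fun e _ => eval_monomial_charVec C e (g.coeff e)
    simp only [hev]
    rw [Finset.sum_comm]
    refine Finset.sum_congr rfl fun e _ => ?_
    rw [← Finset.sum_filter, Finset.sum_const, nsmul_eq_mul, mul_comm]
  rw [key T1, key T2]
  refine Finset.sum_congr rfl fun e he => ?_
  have hcard : e.support.card ≤ 2 := by
    have h1 : e.support.card ≤ e.sum fun _ n => n := by
      rw [Finsupp.sum]
      calc e.support.card = ∑ _i ∈ e.support, 1 := by simp
        _ ≤ ∑ i ∈ e.support, e i :=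
          Finset.sum_le_sum fun i hi =>
            Nat.one_le_iff_ne_zero.mpr (Finsupp.mem_support_iff.mp hi)
    exact h1.trans ((MvPolynomial.le_totalDegree he).trans hg)
  rw [trade_count h e.support hcard]

lemma eval_at_missing {T1 T2 : Finset (Finset (Fin v))} (h : IsTrade T1 T2)
    {B : Finset (Fin v)} (hB : B ∈ T2) {ℬ : Finset (Finset (Fin v))}
    (hsub : T1 ∪ T2.erase B ⊆ ℬ) {g : MvPolynomial (Fin v) ℂ} (hg : g.totalDegree ≤ 2)
    (hvan : ∀ C ∈ ℬ, MvPolynomial.eval (charVec C) g = 0) :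
    MvPolynomial.eval (charVec B) g = 0 := by
  have hT1 : ∀ C ∈ T1, MvPolynomial.eval (charVec C) g = 0 := fun C hC =>
    hvan C (hsub (Finset.mem_union_left _ hC))
  have hT2 : ∀ C ∈ T2.erase B, MvPolynomial.eval (charVec C) g = 0 := fun C hC =>
    hvan C (hsub (Finset.mem_union_right _ hC))
  have hs := eval_sum_trade h hg
  rw [Finset.sum_eq_zero hT1, ← Finset.add_sum_erase _ _ hB, Finset.sum_eq_zero hT2,
    add_zero] at hs
  exact hs.symm

lemma exists_separating (ℬ : Finset (Finset (Fin v))) (B : Finset (Fin v)) (hnB : B ∉ ℬ) :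
    ∃ f ∈ designIdeal ℬ, MvPolynomial.eval (charVec B) f ≠ 0 := by
  have hch : ∀ C ∈ ℬ, ∃ i, charVec B i ≠ charVec C i := by
    intro C hC
    by_contra hno
    push_neg at hno
    have hBC : B = C := by
      ext i
      have hi := hno i
      by_cases h1 : i ∈ B <;> by_cases h2 : i ∈ C <;>
        simp [charVec, h1, h2] at hi ⊢
    exact hnB (hBC ▸ hC)
  choose idx hidx using hch
  refine ⟨∏ C ∈ ℬ.attach, (X (idx C.1 C.2) - MvPolynomial.C (charVec C.1 (idx C.1 C.2))),
    ?_, ?_⟩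
  · rw [mem_designIdeal_iff]
    intro C0 hC0
    rw [map_prod]
    refine Finset.prod_eq_zero (Finset.mem_attach _ ⟨C0, hC0⟩) ?_
    simp
  · rw [map_prod, Finset.prod_ne_zero_iff]
    intro C _
    simp only [map_sub, eval_X, eval_C]
    exact sub_ne_zero.mpr (hidx C.1 C.2)

/-! ### The degree-3 generating set -/

/-- The generating set: `G₀` together with the monomials of the non-blocks. -/
def Gset (ℬ : Finset (Finset (Fin v))) : Set (MvPolynomial (Fin v) ℂ) :=
  G0 (Fin v) 3 ∪ ((fun T : Finset (Fin v) => ∏ i ∈ T, X i) ''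
    {T : Finset (Fin v) | T.card = 3 ∧ T ∉ ℬ})

lemma Gset_deg (ℬ : Finset (Finset (Fin v))) :
    ∀ g ∈ Gset ℬ, g.totalDegree ≤ 3 := by
  rintro g (hg | ⟨T, ⟨hT3, _⟩, rfl⟩)
  · rcases hg with rfl | ⟨i, rfl⟩
    · have h1 : ((∑ i : Fin v, X i : MvPolynomial (Fin v) ℂ)).totalDegree ≤ 1 :=
        (totalDegree_finset_sum _ _).trans
          (Finset.sup_le fun i _ => le_of_eq (totalDegree_X i))
      calc ((∑ i : Fin v, X i) - MvPolynomial.C ((3 : ℕ) : ℂ)).totalDegree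
          ≤ max (∑ i : Fin v, X i : MvPolynomial (Fin v) ℂ).totalDegree
              (-(MvPolynomial.C ((3 : ℕ) : ℂ))).totalDegree := by
            rw [sub_eq_add_neg]; exact totalDegree_add _ _
        _ ≤ 3 := by
            rw [totalDegree_neg, totalDegree_C]
            exact max_le (h1.trans (by norm_num)) (by norm_num)
    · calc ((X i ^ 2 - X i : MvPolynomial (Fin v) ℂ)).totalDegree
          ≤ max ((X i ^ 2 : MvPolynomial (Fin v) ℂ)).totalDegree
              ((-(X i) : MvPolynomial (Fin v) ℂ)).totalDegree := by
            rw [sub_eq_add_neg]; exact totalDegree_add _ _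
        _ ≤ 3 := by
            refine max_le ?_ ?_
            · exact (totalDegree_pow _ _).trans (by rw [totalDegree_X]; norm_num)
            · rw [totalDegree_neg, totalDegree_X]; norm_num
  · calc ((∏ i ∈ T, X i : MvPolynomial (Fin v) ℂ)).totalDegree
        ≤ ∑ i ∈ T, (X i : MvPolynomial (Fin v) ℂ).totalDegree :=
          totalDegree_finset_prod _ _
      _ = T.card := by simp [totalDegree_X]
      _ ≤ 3 := le_of_eq hT3

lemma eval_charVec_card (C : Finset (Fin v)) :
    MvPolynomial.eval (charVec C) (∑ i : Fin v, X i) = (C.card : ℂ) := by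
  rw [map_sum]
  simp only [eval_X]
  have : ∑ i : Fin v, charVec C i = ∑ i : Fin v, if i ∈ C then (1 : ℂ) else 0 := rfl
  rw [this, Finset.sum_ite_mem, Finset.univ_inter, Finset.sum_const, nsmul_eq_mul, mul_one]

lemma span_Gset_le (ℬ : Finset (Finset (Fin v))) (hB3 : ∀ C ∈ ℬ, C.card = 3) :
    Ideal.span (Gset ℬ) ≤ designIdeal ℬ := by
  rw [Ideal.span_le]
  rintro g (hg | ⟨T, ⟨hT3, hTn⟩, rfl⟩) <;> rw [SetLike.mem_coe, mem_designIdeal_iff]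
  · rcases hg with rfl | ⟨i, rfl⟩
    · intro C hC
      rw [map_sub, eval_charVec_card, eval_C, hB3 C hC]
      norm_num
    · intro C hC
      rw [map_sub, map_pow, eval_X]
      by_cases h : i ∈ C <;> simp [charVec, h]
  · intro C hC
    rw [eval_prodX]
    have : ¬ T ⊆ C := fun hsub => hTn (by rwa [Finset.eq_of_subset_of_card_le hsub
      (by rw [hB3 C hC, hT3])])
    rw [if_neg this]

/-! ### The quotient ring argument -/

variable (ℬ : Finset (Finset (Fin v)))

/-- Quotient by the span of the degree-3 generating set. -/
def qπ : MvPolynomial (Fin v) ℂ →ₐ[ℂ] MvPolynomial (Fin v) ℂ ⧸ Ideal.span (Gset ℬ) :=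
  Ideal.Quotient.mkₐ ℂ (Ideal.span (Gset ℬ))

def qy (i : Fin v) : MvPolynomial (Fin v) ℂ ⧸ Ideal.span (Gset ℬ) := qπ ℬ (X i)

def qz (T : Finset (Fin v)) : MvPolynomial (Fin v) ℂ ⧸ Ideal.span (Gset ℬ) :=
  ∏ i ∈ T, qy ℬ i

lemma qπ_gen {g : MvPolynomial (Fin v) ℂ} (hg : g ∈ Gset ℬ) : qπ ℬ g = 0 := by
  show Ideal.Quotient.mk _ g = 0
  exact Ideal.Quotient.eq_zero_iff_mem.mpr (Ideal.subset_span hg)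

lemma qπ_prodX (T : Finset (Fin v)) : qπ ℬ (∏ i ∈ T, X i) = qz ℬ T := map_prod _ _ _

lemma qy_idem (i : Fin v) : qy ℬ i * qy ℬ i = qy ℬ i := by
  have h := qπ_gen ℬ (Or.inl (Set.mem_insert_iff.mpr (Or.inr ⟨i, rfl⟩)))
  rw [map_sub, map_pow, sub_eq_zero] at h
  calc qy ℬ i * qy ℬ i = qπ ℬ (X i) ^ 2 := by rw [sq]; rfl
    _ = qy ℬ i := h

lemma qy_pow {i : Fin v} {n : ℕ} (hn : n ≠ 0) : qy ℬ i ^ n = qy ℬ i := by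
  induction n with
  | zero => exact absurd rfl hn
  | succ m ih =>
    rcases Nat.eq_zero_or_pos m with rfl | hm
    · rw [pow_one]
    · rw [pow_succ, ih hm.ne', qy_idem]

lemma qz_triple {T : Finset (Fin v)} (hT3 : T.card = 3) (hTn : T ∉ ℬ) : qz ℬ T = 0 := by
  rw [← qπ_prodX]
  exact qπ_gen ℬ (Or.inr ⟨T, ⟨hT3, hTn⟩, rfl⟩)

lemma qz_insert (a : Fin v) (T : Finset (Fin v)) :
    qz ℬ T * qy ℬ a = qz ℬ (insert a T) := by
  by_cases ha : a ∈ T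
  · rw [Finset.insert_eq_self.mpr ha]
    unfold qz
    rw [← Finset.mul_prod_erase T _ ha, mul_right_comm, qy_idem]
  · unfold qz
    rw [Finset.prod_insert ha, mul_comm]

lemma qsum_y : (∑ i : Fin v, qy ℬ i) = algebraMap ℂ _ (3 : ℂ) := by
  have h := qπ_gen ℬ (Or.inl (Set.mem_insert _ _))
  rw [map_sub, map_sum, sub_eq_zero] at h
  have hC : qπ ℬ (MvPolynomial.C ((3 : ℕ) : ℂ)) = algebraMap ℂ _ (3 : ℂ) := by
    rw [← MvPolynomial.algebraMap_eq, AlgHom.commutes]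
    norm_num
  rw [← hC]
  exact h

lemma qz_sum_insert (S : Finset (Fin v)) :
    ∑ i : Fin v, qz ℬ (insert i S) = (3 : ℂ) • qz ℬ S := by
  calc ∑ i : Fin v, qz ℬ (insert i S) = ∑ i : Fin v, qz ℬ S * qy ℬ i :=
        Finset.sum_congr rfl fun i _ => (qz_insert ℬ i S).symm
    _ = qz ℬ S * ∑ i : Fin v, qy ℬ i := by rw [Finset.mul_sum]
    _ = (3 : ℂ) • qz ℬ S := by rw [qsum_y, mul_comm, ← Algebra.smul_def]

lemma qz_sum_diff (S : Finset (Fin v)) :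
    ∑ i ∈ Finset.univ \ S, qz ℬ (insert i S) = ((3 : ℂ) - (S.card : ℂ)) • qz ℬ S := by
  have hsplit := Finset.sum_sdiff (f := fun i => qz ℬ (insert i S)) (Finset.subset_univ S)
  have hin : ∑ i ∈ S, qz ℬ (insert i S) = (S.card : ℂ) • qz ℬ S := by
    rw [Finset.sum_congr rfl fun i hi => by rw [Finset.insert_eq_self.mpr hi],
      Finset.sum_const, Nat.cast_smul_eq_nsmul]
  have h2 : ∑ i ∈ Finset.univ \ S, qz ℬ (insert i S) + (S.card : ℂ) • qz ℬ S
      = (3 : ℂ) • qz ℬ S := by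
    rw [← hin, hsplit]
    exact qz_sum_insert ℬ S
  rw [sub_smul]
  exact eq_sub_of_add_eq h2

lemma qz_four (hdes : IsDesign ℬ 3 2 2) {p q r s : Fin v}
    (hpq : p ≠ q) (hpr : p ≠ r) (hps : p ≠ s) (hqr : q ≠ r) (hqs : q ≠ s) (hrs : r ≠ s) :
    qz ℬ (insert s (insert r ({p, q} : Finset (Fin v)))) = 0 := by
  set A : Finset (Fin v) := {p, q} with hA
  have hcardA : A.card = 2 := Finset.card_pair hpq
  have hrA : r ∉ A := by
    simp only [hA, Finset.mem_insert, Finset.mem_singleton]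
    push_neg
    exact ⟨Ne.symm hpr, Ne.symm hqr⟩
  have hsA : s ∉ A := by
    simp only [hA, Finset.mem_insert, Finset.mem_singleton]
    push_neg
    exact ⟨Ne.symm hps, Ne.symm hqs⟩
  have hcard3r : (insert r A).card = 3 := by rw [Finset.card_insert_of_notMem hrA, hcardA]
  have hcard3s : (insert s A).card = 3 := by rw [Finset.card_insert_of_notMem hsA, hcardA]
  by_cases h1 : insert r A ∈ ℬ
  · by_cases h2 : insert s A ∈ ℬ
    · -- both blocks: use the design condition
      have hF : ℬ.filter (fun C => A ⊆ C) = {insert r A, insert s A} := by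
        have hsub : ({insert r A, insert s A} : Finset (Finset (Fin v)))
            ⊆ ℬ.filter (fun C => A ⊆ C) := by
          intro x hx
          rcases Finset.mem_insert.mp hx with rfl | hx
          · exact Finset.mem_filter.mpr ⟨h1, Finset.subset_insert _ _⟩
          · rw [Finset.mem_singleton.mp hx]
            exact Finset.mem_filter.mpr ⟨h2, Finset.subset_insert _ _⟩
        have hne : insert r A ≠ insert s A := by
          intro hEq
          have hmem : r ∈ insert s A := hEq ▸ Finset.mem_insert_self r A
          rcases Finset.mem_insert.mp hmem with h | h
          · exact hrs h
          · exact hrA h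
        have hc2 : ({insert r A, insert s A} : Finset (Finset (Fin v))).card = 2 :=
          Finset.card_pair hne
        exact (Finset.eq_of_subset_of_card_le hsub (by rw [hdes.2 A hcardA, hc2])).symm
      have hpairEq : qz ℬ A = qz ℬ (insert r A) + qz ℬ (insert s A) := by
        have hdiff := qz_sum_diff ℬ A
        rw [hcardA] at hdiff
        have hc1 : ((3 : ℂ) - ((2 : ℕ) : ℂ)) = 1 := by norm_num
        rw [hc1, one_smul] at hdiff
        rw [← hdiff]
        have hrsSub : ({r, s} : Finset (Fin v)) ⊆ Finset.univ \ A := by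
          intro x hx
          rcases Finset.mem_insert.mp hx with rfl | hx
          · exact Finset.mem_sdiff.mpr ⟨Finset.mem_univ _, hrA⟩
          · rw [Finset.mem_singleton.mp hx]
            exact Finset.mem_sdiff.mpr ⟨Finset.mem_univ _, hsA⟩
        rw [← Finset.sum_subset hrsSub ?_]
        · rw [Finset.sum_insert (by simp [hrs]), Finset.sum_singleton]
        · intro i hi hirs
          have hiA : i ∉ A := (Finset.mem_sdiff.mp hi).2
          have hir : i ≠ r := fun hEq => hirs (by simp [hEq])
          have his : i ≠ s := fun hEq => hirs (by simp [hEq])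
          have hcard3i : (insert i A).card = 3 := by
            rw [Finset.card_insert_of_notMem hiA, hcardA]
          refine qz_triple ℬ hcard3i ?_
          intro hmem
          have hmemF : insert i A ∈ ℬ.filter (fun C => A ⊆ C) :=
            Finset.mem_filter.mpr ⟨hmem, Finset.subset_insert _ _⟩
          rw [hF] at hmemF
          rcases Finset.mem_insert.mp hmemF with hEq | hEq
          · have : i ∈ insert r A := hEq ▸ Finset.mem_insert_self i A
            rcases Finset.mem_insert.mp this with h | h
            · exact hir h
            · exact hiA h
          · rw [Finset.mem_singleton] at hEq
            have : i ∈ insert s A := hEq ▸ Finset.mem_insert_self i A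
            rcases Finset.mem_insert.mp this with h | h
            · exact his h
            · exact hiA h
      have e1 : qz ℬ (insert s (insert r A)) = qz ℬ A * qy ℬ r * qy ℬ s := by
        rw [qz_insert, qz_insert]
      have e2 : qz ℬ (insert r A) * qy ℬ r * qy ℬ s = qz ℬ (insert s (insert r A)) := by
        rw [qz_insert, Finset.insert_idem, qz_insert]
      have e3 : qz ℬ (insert s A) * qy ℬ r * qy ℬ s = qz ℬ (insert s (insert r A)) := by
        rw [qz_insert, qz_insert]
        congr 1
        ext x
        simp only [Finset.mem_insert]
        tauto
      have hkey : qz ℬ (insert s (insert r A))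
          = qz ℬ (insert s (insert r A)) + qz ℬ (insert s (insert r A)) := by
        calc qz ℬ (insert s (insert r A)) = qz ℬ A * qy ℬ r * qy ℬ s := e1
          _ = (qz ℬ (insert r A) + qz ℬ (insert s A)) * qy ℬ r * qy ℬ s := by rw [← hpairEq]
          _ = _ := by rw [add_mul, add_mul, e2, e3]
      exact left_eq_add.mp hkey
    · rw [Finset.insert_comm, ← qz_insert ℬ r (insert s A), qz_triple ℬ hcard3s h2, zero_mul]
  · rw [← qz_insert ℬ s (insert r A), qz_triple ℬ hcard3r h1, zero_mul]

lemma qz_card4 (hdes : IsDesign ℬ 3 2 2) {T : Finset (Fin v)} (hT : T.card = 4) :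
    qz ℬ T = 0 := by
  obtain ⟨s, T3, hsT, rfl, h3⟩ := Finset.card_eq_succ.mp hT
  obtain ⟨p, q, r, hpq, hpr, hqr, rfl⟩ := Finset.card_eq_three.mp h3
  simp only [Finset.mem_insert, Finset.mem_singleton] at hsT
  push_neg at hsT
  obtain ⟨hsp, hsq, hsr⟩ := hsT
  have hset : insert s ({p, q, r} : Finset (Fin v)) = insert s (insert r ({p, q} : Finset (Fin v))) := by
    ext x
    simp only [Finset.mem_insert, Finset.mem_singleton]
    tauto
  rw [hset]
  exact qz_four ℬ hdes hpq hpr (Ne.symm hsp) hqr (Ne.symm hsq) (Ne.symm hsr)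

lemma qz_big (hdes : IsDesign ℬ 3 2 2) {T : Finset (Fin v)} (hT : 4 ≤ T.card) :
    qz ℬ T = 0 := by
  obtain ⟨T4, hsub4, hc4⟩ := Finset.exists_subset_card_eq hT
  have hprod := Finset.prod_sdiff (f := qy ℬ) hsub4
  have : qz ℬ T = qz ℬ (T \ T4) * qz ℬ T4 := by rw [qz, qz, qz, hprod]
  rw [this, qz_card4 ℬ hdes hc4, mul_zero]

/-- The span of the images of the block monomials. -/
def qV : Submodule ℂ (MvPolynomial (Fin v) ℂ ⧸ Ideal.span (Gset ℬ)) :=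
  Submodule.span ℂ ((fun C => qz ℬ C) '' (ℬ : Set (Finset (Fin v))))

lemma qz_mem3 (hdes : IsDesign ℬ 3 2 2) {T : Finset (Fin v)} (hT : T.card = 3) :
    qz ℬ T ∈ qV ℬ := by
  by_cases h : T ∈ ℬ
  · exact Submodule.subset_span ⟨T, h, rfl⟩
  · rw [qz_triple ℬ hT h]; exact zero_mem _

lemma qz_mem2 (hdes : IsDesign ℬ 3 2 2) {a b : Fin v} (hab : a ≠ b) :
    qz ℬ {a, b} ∈ qV ℬ := by
  have hdiff := qz_sum_diff ℬ {a, b}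
  rw [Finset.card_pair hab] at hdiff
  have hc1 : ((3 : ℂ) - ((2 : ℕ) : ℂ)) = 1 := by norm_num
  rw [hc1, one_smul] at hdiff
  rw [← hdiff]
  refine Submodule.sum_mem _ fun i hi => ?_
  have hiA : i ∉ ({a, b} : Finset (Fin v)) := (Finset.mem_sdiff.mp hi).2
  exact qz_mem3 ℬ hdes (by rw [Finset.card_insert_of_notMem hiA, Finset.card_pair hab])

lemma qz_mem1 (hdes : IsDesign ℬ 3 2 2) (a : Fin v) : qz ℬ {a} ∈ qV ℬ := by
  have hdiff := qz_sum_diff ℬ {a}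
  rw [Finset.card_singleton] at hdiff
  have h2 : ((3 : ℂ) - (1 : ℕ)) = 2 := by norm_num
  rw [h2] at hdiff
  have heq : qz ℬ {a} = (2 : ℂ)⁻¹ • ∑ i ∈ Finset.univ \ {a}, qz ℬ (insert i {a}) := by
    rw [hdiff, smul_smul]
    norm_num
  rw [heq]
  refine Submodule.smul_mem _ _ (Submodule.sum_mem _ fun i hi => ?_)
  have hia : i ≠ a := by
    have := (Finset.mem_sdiff.mp hi).2
    simpa using this
  exact qz_mem2 ℬ hdes hia

lemma qz_mem0 (hdes : IsDesign ℬ 3 2 2) :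
    (1 : MvPolynomial (Fin v) ℂ ⧸ Ideal.span (Gset ℬ)) ∈ qV ℬ := by
  have hdiff := qz_sum_diff ℬ ∅
  rw [Finset.card_empty, Finset.sdiff_empty] at hdiff
  have hz : qz ℬ (∅ : Finset (Fin v)) = 1 := Finset.prod_empty
  rw [hz] at hdiff
  have hc1 : ((3 : ℂ) - ((0 : ℕ) : ℂ)) = 3 := by norm_num
  rw [hc1] at hdiff
  have heq : (1 : MvPolynomial (Fin v) ℂ ⧸ Ideal.span (Gset ℬ))
      = (3 : ℂ)⁻¹ • ∑ i : Fin v, qz ℬ (insert i ∅) := by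
    rw [hdiff, smul_smul]
    norm_num
  rw [heq]
  refine Submodule.smul_mem _ _ (Submodule.sum_mem _ fun i _ => ?_)
  exact qz_mem1 ℬ hdes i

lemma qz_mem (hdes : IsDesign ℬ 3 2 2) (T : Finset (Fin v)) : qz ℬ T ∈ qV ℬ := by
  rcases Nat.lt_or_ge T.card 4 with hlt | hge
  · have hcases : T.card = 0 ∨ T.card = 1 ∨ T.card = 2 ∨ T.card = 3 := by omega
    rcases hcases with h | h | h | h
    · rw [Finset.card_eq_zero.mp h]
      exact qz_mem0 ℬ hdes
    · obtain ⟨a, rfl⟩ := Finset.card_eq_one.mp h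
      exact qz_mem1 ℬ hdes a
    · obtain ⟨a, b, hab, rfl⟩ := Finset.card_eq_two.mp h
      exact qz_mem2 ℬ hdes hab
    · exact qz_mem3 ℬ hdes h
  · rw [qz_big ℬ hdes hge]
    exact zero_mem _

lemma qπ_mem (hdes : IsDesign ℬ 3 2 2) (f : MvPolynomial (Fin v) ℂ) :
    qπ ℬ f ∈ qV ℬ := by
  rw [MvPolynomial.as_sum f, map_sum]
  refine Submodule.sum_mem _ fun e _ => ?_
  have hmon : (monomial e (f.coeff e) : MvPolynomial (Fin v) ℂ)
      = f.coeff e • monomial e 1 := by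
    rw [MvPolynomial.smul_eq_C_mul, MvPolynomial.C_mul_monomial, mul_one]
  rw [hmon, map_smul]
  refine Submodule.smul_mem _ _ ?_
  have h1 : qπ ℬ (monomial e 1) = qz ℬ e.support := by
    rw [MvPolynomial.monomial_eq, MvPolynomial.C_1, one_mul, Finsupp.prod, map_prod]
    refine Finset.prod_congr rfl fun i hi => ?_
    rw [map_pow]
    exact qy_pow ℬ (Finsupp.mem_support_iff.mp hi)
  rw [h1]
  exact qz_mem ℬ hdes e.support

lemma designIdeal_eq_span (hdes : IsDesign ℬ 3 2 2) :
    designIdeal ℬ = Ideal.span (Gset ℬ) := by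
  refine le_antisymm ?_ (span_Gset_le ℬ hdes.1)
  intro f hf
  have hfV : qπ ℬ f ∈ qV ℬ := qπ_mem ℬ hdes f
  have himg : ((fun C => qz ℬ C) '' (ℬ : Set (Finset (Fin v))))
      = ⇑(qπ ℬ).toLinearMap ''
        ((fun C : Finset (Fin v) => ∏ i ∈ C, X i) '' (ℬ : Set (Finset (Fin v)))) := by
    rw [Set.image_image]
    exact (Set.image_congr fun C _ => qπ_prodX ℬ C).symm
  have hmap : qV ℬ = Submodule.map (qπ ℬ).toLinearMap
      (Submodule.span ℂ ((fun C : Finset (Fin v) => ∏ i ∈ C, X i)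
        '' (ℬ : Set (Finset (Fin v))))) := by
    rw [qV, himg, Submodule.span_image]
  rw [hmap] at hfV
  obtain ⟨g, hgspan, hgf⟩ := Submodule.mem_map.mp hfV
  have hfg : f - g ∈ Ideal.span (Gset ℬ) := by
    have hmk : Ideal.Quotient.mk (Ideal.span (Gset ℬ)) f = Ideal.Quotient.mk _ g := by
      have h' : qπ ℬ g = qπ ℬ f := hgf
      simpa [qπ, Ideal.Quotient.mkₐ_eq_mk] using h'.symm
    exact Ideal.Quotient.eq.mp hmk
  have hgI : g ∈ designIdeal ℬ := by
    have hg' : g = f - (f - g) := by ring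
    rw [hg']
    exact Ideal.sub_mem _ hf (span_Gset_le ℬ hdes.1 hfg)
  set m : Finset (Fin v) → MvPolynomial (Fin v) ℂ := fun C => ∏ i ∈ C, X i with hm
  have hset : (m '' (ℬ : Set (Finset (Fin v)))) = ((ℬ.image m : Finset _) : Set _) :=
    (Finset.coe_image).symm
  rw [hset] at hgspan
  obtain ⟨cf, -, hcf⟩ := Submodule.mem_span_finset.mp hgspan
  have hinj : ∀ C1 ∈ ℬ, ∀ C2 ∈ ℬ, m C1 = m C2 → C1 = C2 := by
    have key : ∀ C1 C2 : Finset (Fin v), m C1 = m C2 → C2 ⊆ C1 := by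
      intro C1 C2 hEq
      have hev := congrArg (MvPolynomial.eval (charVec C1)) hEq
      rw [hm] at hev
      simp only [eval_prodX] at hev
      rw [if_pos (subset_refl C1)] at hev
      by_contra hc
      rw [if_neg hc] at hev
      exact one_ne_zero hev
    intro C1 _ C2 _ hEq
    exact Finset.Subset.antisymm (key C2 C1 hEq.symm) (key C1 C2 hEq)
  rw [Finset.sum_image hinj] at hcf
  have hc0 : ∀ C0 ∈ ℬ, cf (m C0) = 0 := by
    intro C0 hC0
    have h0 := mem_designIdeal_iff.mp hgI C0 hC0
    rw [← hcf, map_sum] at h0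
    have hterm : ∀ C ∈ ℬ, MvPolynomial.eval (charVec C0) (cf (m C) • m C)
        = if C = C0 then cf (m C) else 0 := by
      intro C hC
      rw [MvPolynomial.smul_eq_C_mul, map_mul, eval_C, hm]
      simp only [eval_prodX]
      by_cases hCC : C = C0
      · rw [if_pos hCC, if_pos (hCC ▸ subset_refl C), mul_one]
      · have hns : ¬ C ⊆ C0 := fun hsub => hCC (Finset.eq_of_subset_of_card_le hsub
          (le_of_eq ((hdes.1 C0 hC0).trans (hdes.1 C hC).symm)))
        rw [if_neg hns, if_neg hCC, mul_zero]
    rw [Finset.sum_congr rfl hterm, Finset.sum_ite_eq' ℬ C0 (fun C => cf (m C)),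
      if_pos hC0] at h0
    exact h0
  have hg0 : g = 0 := by
    rw [← hcf]
    exact Finset.sum_eq_zero fun C hC => by rw [hc0 C hC, zero_smul]
  have hfin : f = f - g := by rw [hg0, sub_zero]
  rw [hfin]
  exact hfg

end TradeAux


/-- if a `2`-`(v,3,2)` design contains `T1 ∪ (T2 \\ {B})` of a trade
`{T1, T2}` with `B ∈ T2` but omits `B`, then `γ₂(ℬ) = 3`. -/
theorem trade_gamma2_eq_three (v : ℕ) (T1 T2 : Finset (Finset (Fin v)))
    (h : IsTrade T1 T2) (B : Finset (Fin v)) (hB : B ∈ T2)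
    (ℬ : Finset (Finset (Fin v))) (hdes : IsDesign ℬ 3 2 2)
    (hsub : T1 ∪ T2.erase B ⊆ ℬ) (hnB : B ∉ ℬ) :
    gamma2 ℬ = 3 := by
  have h3mem : 3 ∈ {s : ℕ | ∃ G : Set (MvPolynomial (Fin v) ℂ),
      (∀ g ∈ G, g.totalDegree ≤ s) ∧ Ideal.span G = designIdeal ℬ} :=
    ⟨TradeAux.Gset ℬ, TradeAux.Gset_deg ℬ, (TradeAux.designIdeal_eq_span ℬ hdes).symm⟩
  have hlb : ∀ s ∈ {s : ℕ | ∃ G : Set (MvPolynomial (Fin v) ℂ),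
      (∀ g ∈ G, g.totalDegree ≤ s) ∧ Ideal.span G = designIdeal ℬ}, 3 ≤ s := by
    intro s hs
    obtain ⟨G, hdeg, hspan⟩ := hs
    by_contra hlt
    push_neg at hlt
    obtain ⟨f0, hf0I, hf0B⟩ := TradeAux.exists_separating ℬ B hnB
    have hker : designIdeal ℬ ≤ RingHom.ker (MvPolynomial.eval (charVec B)) := by
      rw [← hspan, Ideal.span_le]
      intro g hg
      have hgI : g ∈ designIdeal ℬ := hspan ▸ Ideal.subset_span hg
      have hvan : ∀ C ∈ ℬ, MvPolynomial.eval (charVec C) g = 0 :=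
        TradeAux.mem_designIdeal_iff.mp hgI
      exact RingHom.mem_ker.mpr
        (TradeAux.eval_at_missing h hB hsub ((hdeg g hg).trans (by omega)) hvan)
    exact hf0B (RingHom.mem_ker.mp (hker hf0I))
  exact le_antisymm (Nat.sInf_le h3mem) (le_csInf ⟨3, h3mem⟩ hlb)
end
end
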